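/- arXiv:2504.07390 — 9 statements merged into one kernel-verified Lean document; each statement's English description precedes it below -/
import Mathlib

section
/- Let m ≥ 1 and for each k ∈ {1,…,m} let s_k ≥ 1, let P_k be an s_k×s_k complex orthogonal projection and M_k an s_k×s_k complex matrix with M_k P_k = P_k M_k = P_k. Let Δ ∈ [0,1] satisfy ‖M_k − P_k‖ ≤ 1 − Δ for every k. Define the family Kronecker products M and P as the matrices indexed by the product type ∏_k Fin(s_k), with entries M(i,j) = ∏_k M_k(i_k, j_k) and P(i,j) = ∏_k P_k(i_k, j_k). Then (1−Δ)²·I + (1−(1−Δ)²)·P − M·M† is positive semidefinite, where I is the identity matrix on the product index type. -/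
/-!
Put `c = (1 - Δ)²` and `Q k = M k - P k`. The relations `M P = P M = P` kill the cross terms, so
`M M† = P + Q Q†` with `Q = (1 - P) Q`, and `Q Q† ≤ ‖Q‖² ≤ c` gives the local bound
`M_k M_k† ≤ P_k + c (1 - P_k)`. Kronecker products are monotone on positive semidefinite factors,
and expanding `⊗ₖ (P_k + c (1 - P_k))` over subsets `S` of the factors gives `∑_S c^|S| E_S`, where
the positive semidefinite `E_S` sum to `1` and `E_∅ = ⊗ₖ P_k`. Since `c^|S| ≤ c` for `S ≠ ∅`, this
is at most `c • 1 + (1 - c) • ⊗ₖ P_k`.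
-/

open Matrix
open scoped ComplexOrder

/-- The operator norm of a square complex matrix (largest singular value). -/
noncomputable def opNorm {n : Type*} [Fintype n] [DecidableEq n] (A : Matrix n n ℂ) : ℝ :=
  ‖Matrix.toEuclideanCLM (𝕜 := ℂ) A‖

/-- The "family Kronecker product" of a family of square matrices `A k` of sizes `s k`:
the matrix on the index set `∀ k, Fin (s k)` with `(i, j)` entry `∏ k, A k (i k) (j k)`. -/
def famKron {m : ℕ} {s : Fin m → ℕ} (A : (k : Fin m) → Matrix (Fin (s k)) (Fin (s k)) ℂ) :
    Matrix ((k : Fin m) → Fin (s k)) ((k : Fin m) → Fin (s k)) ℂ :=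
  Matrix.of fun i j => ∏ k, A k (i k) (j k)

open scoped MatrixOrder Matrix.Norms.L2Operator

section
variable {A : Type*} [CStarAlgebra A] [PartialOrder A] [StarOrderedRing A]

lemma mul_star_le_add_norm_sq_smul_one_sub {p a : A} (hp : IsStarProjection p)
    (hap : a * p = p) (hpa : p * a = p) :
    a * star a ≤ p + ‖a - p‖ ^ 2 • (1 - p) := by
  set q := a - p
  have hpq : p * q = 0 := by simp [q, mul_sub, hpa, hp.isIdempotentElem.eq]
  have hqp : q * p = 0 := by simp [q, sub_mul, hap, hp.isIdempotentElem.eq]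
  have hgram : a * star a = p + q * star q := by
    have hpq' : p * star q = 0 := by simpa [hp.isSelfAdjoint.star_eq] using congrArg star hqp
    rw [show a = p + q by simp [q], star_add, hp.isSelfAdjoint.star_eq]
    simp only [mul_add, add_mul, hp.isIdempotentElem.eq, hqp, hpq']
    abel
  have hbound : q * star q ≤ (1 - p) * algebraMap ℝ A (‖q‖ ^ 2) * star (1 - p) := by
    have hq : q = (1 - p) * q := by rw [sub_mul, one_mul, hpq, sub_zero]
    conv_lhs => rw [hq, star_mul, ← mul_assoc, mul_assoc _ q]
    exact star_right_conjugate_le_conjugate CStarAlgebra.mul_star_le_algebraMap_norm_sq _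
  rw [hgram]
  gcongr
  convert hbound using 1
  rw [Algebra.algebraMap_eq_smul_one, mul_smul_comm, mul_one, smul_mul_assoc, star_sub, star_one,
    hp.isSelfAdjoint.star_eq, hp.isIdempotentElem.one_sub.eq]

end

section
variable {m : ℕ} {s : Fin m → ℕ}

lemma famKron_mul (A B : (k : Fin m) → Matrix (Fin (s k)) (Fin (s k)) ℂ) :
    famKron A * famKron B = famKron (fun k => A k * B k) := by
  ext i j
  simp only [famKron, mul_apply, of_apply, Finset.prod_univ_sum, Fintype.piFinset_univ,
    Finset.prod_mul_distrib]

lemma famKron_conjTranspose (A : (k : Fin m) → Matrix (Fin (s k)) (Fin (s k)) ℂ) :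
    (famKron A)ᴴ = famKron (fun k => (A k)ᴴ) := by
  ext i j
  simp [famKron, conjTranspose_apply, star_prod]

lemma famKron_one : famKron (fun k => (1 : Matrix (Fin (s k)) (Fin (s k)) ℂ)) = 1 := by
  ext i j
  simp [famKron, one_apply, Finset.prod_boole, funext_iff]

lemma famKron_nonneg {A : (k : Fin m) → Matrix (Fin (s k)) (Fin (s k)) ℂ}
    (hA : ∀ k, 0 ≤ A k) : 0 ≤ famKron A := by
  choose B hB using fun k => CStarAlgebra.nonneg_iff_eq_star_mul_self.mp (hA k)
  have : famKron A = star (famKron B) * famKron B := by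
    rw [star_eq_conjTranspose, famKron_conjTranspose, famKron_mul]
    exact congrArg famKron (funext hB)
  rw [this]
  exact star_mul_self_nonneg _

lemma famKron_update_sub (A : (k : Fin m) → Matrix (Fin (s k)) (Fin (s k)) ℂ)
    (j : Fin m) (X Y : Matrix (Fin (s j)) (Fin (s j)) ℂ) :
    famKron (Function.update A j X) - famKron (Function.update A j Y)
      = famKron (Function.update A j (X - Y)) := by
  ext a b
  have key (Z : Matrix (Fin (s j)) (Fin (s j)) ℂ) :
      famKron (Function.update A j Z) a b = Z (a j) (b j) * ∏ k ∈ {j}ᶜ, A k (a k) (b k) := by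
    have : ∀ k, Function.update A j Z k (a k) (b k)
        = Function.update (fun k => A k (a k) (b k)) j (Z (a j) (b j)) k := by
      intro k
      rcases eq_or_ne k j with rfl | h <;> simp [*]
    simp only [famKron, of_apply, this, Finset.prod_update_of_mem (Finset.mem_univ j),
      Finset.sdiff_singleton_eq_erase, Finset.compl_singleton]
  rw [Matrix.sub_apply, key, key, key, Matrix.sub_apply, sub_mul]

lemma famKron_piecewise_apply (S : Finset (Fin m))
    (A B : (k : Fin m) → Matrix (Fin (s k)) (Fin (s k)) ℂ) (a b : (k : Fin m) → Fin (s k)) :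
    famKron (S.piecewise A B) a b
      = (∏ k ∈ S, A k (a k) (b k)) * ∏ k ∈ Sᶜ, B k (a k) (b k) := by
  have : ∀ k, S.piecewise A B k (a k) (b k)
      = S.piecewise (fun k => A k (a k) (b k)) (fun k => B k (a k) (b k)) k := by
    intro k
    by_cases h : k ∈ S <;> simp [h]
  simp only [famKron, of_apply, this, Finset.prod_piecewise, Finset.univ_inter,
    Finset.compl_eq_univ_sdiff]

lemma famKron_add_eq_sum (A B : (k : Fin m) → Matrix (Fin (s k)) (Fin (s k)) ℂ) :
    famKron (fun k => A k + B k) = ∑ S : Finset (Fin m), famKron (S.piecewise A B) := by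
  ext a b
  simp only [Matrix.sum_apply, famKron_piecewise_apply, Finset.compl_eq_univ_sdiff]
  simp only [famKron, of_apply, Matrix.add_apply]
  rw [Finset.prod_add, Finset.powerset_univ]

lemma famKron_piecewise_smul (S : Finset (Fin m)) (c : ℝ)
    (A B : (k : Fin m) → Matrix (Fin (s k)) (Fin (s k)) ℂ) :
    famKron (S.piecewise (fun k => c • A k) B) = c ^ S.card • famKron (S.piecewise A B) := by
  ext a b
  simp only [famKron_piecewise_apply, Matrix.smul_apply, Complex.real_smul,
    Finset.prod_mul_distrib, Finset.prod_const]
  push_cast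
  ring

lemma famKron_mono {A B : (k : Fin m) → Matrix (Fin (s k)) (Fin (s k)) ℂ}
    (hA : ∀ k, 0 ≤ A k) (hAB : ∀ k, A k ≤ B k) : famKron A ≤ famKron B := by
  -- replace the factors `A k` by `B k` one index at a time
  have step (T : Finset (Fin m)) : famKron A ≤ famKron (T.piecewise B A) := by
    induction T using Finset.induction_on with
    | empty => simp
    | insert j T hj ih =>
      refine ih.trans (sub_nonneg.mp ?_)
      have hT : T.piecewise B A = Function.update (T.piecewise B A) j (A j) := by
        simp [Finset.piecewise_eq_of_notMem _ _ _ hj]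
      rw [Finset.piecewise_insert]
      nth_rewrite 2 [hT]
      rw [famKron_update_sub]
      refine famKron_nonneg fun k => ?_
      rcases eq_or_ne k j with rfl | hkj
      · simpa using sub_nonneg.mpr (hAB k)
      · rw [Function.update_of_ne hkj]
        by_cases hkT : k ∈ T
        · simpa [hkT] using (hA k).trans (hAB k)
        · simpa [hkT] using hA k
  simpa using step Finset.univ

lemma famKron_add_smul_one_sub_le {P : (k : Fin m) → Matrix (Fin (s k)) (Fin (s k)) ℂ}
    (hP0 : ∀ k, 0 ≤ P k) (hP1 : ∀ k, P k ≤ 1) {c : ℝ} (hc0 : 0 ≤ c) (hc1 : c ≤ 1) :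
    famKron (fun k => P k + c • (1 - P k)) ≤ c • 1 + (1 - c) • famKron P := by
  set E : Finset (Fin m) → Matrix _ _ ℂ := fun S => famKron (S.piecewise (fun k => 1 - P k) P)
  have hE (S : Finset (Fin m)) : 0 ≤ E S := by
    refine famKron_nonneg fun k => ?_
    by_cases hk : k ∈ S
    · simpa [hk] using hP1 k
    · simpa [hk] using hP0 k
  have hone : 1 = ∑ S, E S := by
    rw [← famKron_one, ← famKron_add_eq_sum]
    simp
  have hexpand : famKron (fun k => P k + c • (1 - P k)) = ∑ S, c ^ S.card • E S := by
    simp_rw [add_comm (P _), famKron_add_eq_sum, famKron_piecewise_smul]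
    rfl
  have hweight (S : Finset (Fin m)) : c ^ S.card ≤ c + if S = ∅ then 1 - c else 0 := by
    split_ifs with hS
    · simp [hS]
    · have hcard : S.card ≠ 0 := Finset.card_ne_zero.mpr (Finset.nonempty_iff_ne_empty.mpr hS)
      simpa using pow_le_of_le_one hc0 hc1 hcard
  calc famKron (fun k => P k + c • (1 - P k))
      ≤ ∑ S, (c + if S = ∅ then 1 - c else 0) • E S := by
        rw [hexpand]
        exact Finset.sum_le_sum fun S _ => smul_le_smul_of_nonneg_right (hweight S) (hE S)
    _ = c • 1 + (1 - c) • famKron P := by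
        simp [add_smul, Finset.sum_add_distrib, ← Finset.smul_sum, ← hone, ite_smul, E]

end

theorem tensor_gram_dominated_by_haar_projector_general
    (m : ℕ) (s : Fin m → ℕ)
    (P M : (k : Fin m) → Matrix (Fin (s k)) (Fin (s k)) ℂ)
    (hP_herm : ∀ k, (P k)ᴴ = P k) (hP_idem : ∀ k, P k * P k = P k)
    (hMP : ∀ k, M k * P k = P k) (hPM : ∀ k, P k * M k = P k)
    (Δ : ℝ) (hΔ0 : 0 ≤ Δ) (hΔ1 : Δ ≤ 1)
    (hgap : ∀ k, opNorm (M k - P k) ≤ 1 - Δ) :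
    ((((1 - Δ) ^ 2 : ℝ) : ℂ) • (1 : Matrix ((k : Fin m) → Fin (s k)) ((k : Fin m) → Fin (s k)) ℂ)
      + ((1 - (1 - Δ) ^ 2 : ℝ) : ℂ) • famKron P
      - famKron M * (famKron M)ᴴ).PosSemidef := by
  have hP (k : Fin m) : IsStarProjection (P k) := ⟨hP_idem k, hP_herm k⟩
  have hlocal (k : Fin m) : M k * (M k)ᴴ ≤ P k + (1 - Δ) ^ 2 • (1 - P k) := by
    refine (mul_star_le_add_norm_sq_smul_one_sub (hP k) (hMP k) (hPM k)).trans ?_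
    gcongr
    · exact (hP k).one_sub_nonneg
    · exact hgap k
  rw [← Matrix.le_iff, Complex.coe_smul, Complex.coe_smul, famKron_conjTranspose, famKron_mul]
  calc famKron (fun k => M k * (M k)ᴴ)
      ≤ famKron (fun k => P k + (1 - Δ) ^ 2 • (1 - P k)) :=
        famKron_mono (fun k => mul_star_self_nonneg (M k)) hlocal
    _ ≤ _ := famKron_add_smul_one_sub_le (fun k => (hP k).nonneg) (fun k => (hP k).le_one)
        (sq_nonneg _) (pow_le_one₀ (by linarith) (by linarith))

/-- Lemma S3.  For each `k`, let `P k` be an orthogonal projection and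
`M k` a matrix with `M k * P k = P k * M k = P k` and `‖M k - P k‖ ≤ 1 - Δ`.
Then `(1-Δ)² • 1 + (1-(1-Δ)²) • (⊗ₖ P k) - (⊗ₖ M k) (⊗ₖ M k)ᴴ` is positive semidefinite. -/
theorem tensor_gram_dominated_by_haar_projector
    (m : ℕ) (hm : 1 ≤ m) (s : Fin m → ℕ) (hs : ∀ k, 1 ≤ s k)
    (P M : (k : Fin m) → Matrix (Fin (s k)) (Fin (s k)) ℂ)
    (hP_herm : ∀ k, (P k)ᴴ = P k) (hP_idem : ∀ k, P k * P k = P k)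
    (hMP : ∀ k, M k * P k = P k) (hPM : ∀ k, P k * M k = P k)
    (Δ : ℝ) (hΔ0 : 0 ≤ Δ) (hΔ1 : Δ ≤ 1)
    (hgap : ∀ k, opNorm (M k - P k) ≤ 1 - Δ) :
    ((((1 - Δ) ^ 2 : ℝ) : ℂ) • (1 : Matrix ((k : Fin m) → Fin (s k)) ((k : Fin m) → Fin (s k)) ℂ)
      + ((1 - (1 - Δ) ^ 2 : ℝ) : ℂ) • famKron P
      - famKron M * (famKron M)ᴴ).PosSemidef :=
  tensor_gram_dominated_by_haar_projector_general m s P M hP_herm hP_idem hMP hPM Δ hΔ0 hΔ1 hgap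
end

section
/- Let n ≥ 1, let H be a finite index set, let (q_η)_{η∈H} be nonnegative reals with ∑_η q_η = 1, let P be an n×n orthogonal projection, and for each η ∈ H let M_η be an n×n complex matrix and Π_η an n×n orthogonal projection such that: (i) M_η P = P M_η = P and Π_η P = P Π_η = P; (ii) M_η M_η† ≤ (1−Δ_loc)²·I + (1−(1−Δ_loc)²)·Π_η, where Δ_loc ∈ [0,1] is a fixed constant. Set M_ν := ∑_η q_η M_η and M_H := ∑_η q_η Π_η. Then 1 − ‖M_ν − P‖ ≥ (Δ_loc/2)·(1 − ‖M_H − P‖). -/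
open Matrix
open scoped ComplexOrder

/-! Since `p * x = p`, the C⋆-identity gives `‖x - p‖² = ‖(1 - p) x x⋆ (1 - p)‖`. For the convex
combination `x = ∑ qᵢ mᵢ`, nonnegativity of the variance `∑ qᵢ (mᵢ - x)(mᵢ - x)⋆` and the Gram
bounds give `x x⋆ ≤ (1 - Δ)² + (1 - (1 - Δ)²) ∑ qᵢ Πᵢ`; compressing by `1 - p` replaces `∑ qᵢ Πᵢ`
by `∑ qᵢ Πᵢ - p`. Hence `a² ≤ 1 - (2Δ - Δ²)(1 - b)` for `a = ‖M_ν - P‖` and `b = ‖M_H - P‖ ≤ 1`,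
and `√(1 - u) ≤ 1 - u / 2` together with `2Δ - Δ² ≥ Δ` gives the claim. -/

section
variable {A : Type*} [Ring A] [StarRing A] [PartialOrder A] [StarOrderedRing A]
  [Algebra ℂ A] [StarModule ℂ A]

theorem sum_smul_mul_star_sum_smul_le {ι : Type*} [Fintype ι] (q : ι → ℝ) (hq : ∀ i, 0 ≤ q i)
    (hq1 : ∑ i, q i = 1) (x : ι → A) :
    (∑ i, (q i : ℂ) • x i) * star (∑ i, (q i : ℂ) • x i) ≤
      ∑ i, (q i : ℂ) • (x i * star (x i)) := by
  set m := ∑ i, (q i : ℂ) • x i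
  have hstar : star m = ∑ i, (q i : ℂ) • star (x i) := by
    simp only [m, star_sum, star_smul, Complex.star_def, Complex.conj_ofReal]
  have hq1' : ∑ i, (q i : ℂ) = 1 := by exact_mod_cast hq1
  have hvar : ∑ i, (q i : ℂ) • ((x i - m) * star (x i - m))
      = ∑ i, (q i : ℂ) • (x i * star (x i)) - m * star m := by
    have h1 : ∑ i, (q i : ℂ) • (x i * star m) = m * star m := by
      simp only [m, Finset.sum_mul, smul_mul_assoc]
    have h2 : ∑ i, (q i : ℂ) • (m * star (x i)) = m * star m := by
      simp only [hstar, Finset.mul_sum, mul_smul_comm]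
    have h3 : ∑ i, (q i : ℂ) • (m * star m) = m * star m := by
      rw [← Finset.sum_smul, hq1', one_smul]
    simp only [star_sub, mul_sub, sub_mul, smul_sub, Finset.sum_sub_distrib, h1, h2, h3]
    abel
  have hnonneg : 0 ≤ ∑ i, (q i : ℂ) • ((x i - m) * star (x i - m)) :=
    Finset.sum_nonneg fun i _ => smul_nonneg (by exact_mod_cast hq i) (mul_star_self_nonneg _)
  rwa [hvar, sub_nonneg] at hnonneg

end

namespace IsStarProjection

theorem norm_sub_sq_eq {A : Type*} [NormedRing A] [StarRing A] [CStarRing A] {p x : A}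
    (hp : IsStarProjection p) (hpx : p * x = p) :
    ‖x - p‖ ^ 2 = ‖(1 - p) * (x * star x) * (1 - p)‖ := by
  have hxp : star x * p = p := by
    simpa [hp.isSelfAdjoint.star_eq] using congr(star $hpx)
  have hstar : star (x - p) = star x * (1 - p) := by
    rw [star_sub, hp.isSelfAdjoint.star_eq, mul_sub, mul_one, hxp]
  have hconj : star (star x * (1 - p)) * (star x * (1 - p)) = (1 - p) * (x * star x) * (1 - p) := by
    rw [star_mul, star_star, star_sub, star_one, hp.isSelfAdjoint.star_eq]
    noncomm_ring
  rw [← norm_star, hstar, sq, ← CStarRing.norm_star_mul_self, hconj]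

theorem norm_one_sub_conj_le {A : Type*} [CStarAlgebra A] {p : A} (hp : IsStarProjection p)
    {s t : ℝ} (hs : 0 ≤ s) (ht : 0 ≤ t) (y : A) :
    ‖(1 - p) * ((s : ℂ) • 1 + (t : ℂ) • y) * (1 - p)‖ ≤ s + t * ‖y - p‖ := by
  have hq := hp.one_sub
  have hsplit : (1 - p) * ((s : ℂ) • 1 + (t : ℂ) • y) * (1 - p)
      = (s : ℂ) • (1 - p) + (t : ℂ) • ((1 - p) * (y - p) * (1 - p)) := by
    have h0 : (1 - p) * p = 0 := hp.one_sub_mul_self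
    rw [mul_sub (1 - p) y p, h0, sub_zero, mul_add, add_mul, mul_smul_comm, mul_one, smul_mul_assoc,
      hq.isIdempotentElem.eq, mul_smul_comm, smul_mul_assoc]
  have h1 := hq.norm_le
  calc _ ≤ ‖(s : ℂ) • (1 - p)‖ + ‖(t : ℂ) • ((1 - p) * (y - p) * (1 - p))‖ :=
        hsplit ▸ norm_add_le _ _
    _ ≤ s * 1 + t * (1 * ‖y - p‖ * 1) := by
        rw [norm_smul, norm_smul, Complex.norm_of_nonneg hs, Complex.norm_of_nonneg ht]
        gcongr
        exact norm_mul₃_le.trans (by gcongr)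
    _ = s + t * ‖y - p‖ := by ring

end IsStarProjection

section
variable {A : Type*} [CStarAlgebra A] {ι : Type*} [Fintype ι] {p : A} (q : ι → ℝ)

theorem IsStarProjection.norm_sum_smul_sub_sq_le [PartialOrder A] [StarOrderedRing A]
    (hp : IsStarProjection p) (hq : ∀ i, 0 ≤ q i) (hq1 : ∑ i, q i = 1) {s t : ℝ} (hs : 0 ≤ s)
    (ht : 0 ≤ t) (m y : ι → A) (hpm : ∀ i, p * m i = p)
    (hmy : ∀ i, m i * star (m i) ≤ (s : ℂ) • 1 + (t : ℂ) • y i) :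
    ‖∑ i, (q i : ℂ) • m i - p‖ ^ 2 ≤ s + t * ‖∑ i, (q i : ℂ) • y i - p‖ := by
  set x := ∑ i, (q i : ℂ) • m i
  have hq1' : ∑ i, (q i : ℂ) = 1 := by exact_mod_cast hq1
  have hpx : p * x = p := by
    simp only [x, Finset.mul_sum, mul_smul_comm, hpm, ← Finset.sum_smul, hq1', one_smul]
  have hxx : x * star x ≤ (s : ℂ) • 1 + (t : ℂ) • ∑ i, (q i : ℂ) • y i :=
    calc x * star x ≤ ∑ i, (q i : ℂ) • (m i * star (m i)) :=
          sum_smul_mul_star_sum_smul_le q hq hq1 m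
      _ ≤ ∑ i, (q i : ℂ) • ((s : ℂ) • 1 + (t : ℂ) • y i) :=
          Finset.sum_le_sum fun i _ => smul_le_smul_of_nonneg_left (hmy i) (by exact_mod_cast hq i)
      _ = (s : ℂ) • 1 + (t : ℂ) • ∑ i, (q i : ℂ) • y i := by
          simp only [smul_add, Finset.sum_add_distrib, ← Finset.sum_smul, hq1', one_smul,
            Finset.smul_sum, smul_comm (t : ℂ)]
  have h1p : star (1 - p) = 1 - p := hp.one_sub.isSelfAdjoint.star_eq
  rw [hp.norm_sub_sq_eq hpx]
  refine (CStarAlgebra.norm_le_norm_of_nonneg_of_le ?_ ?_).trans (hp.norm_one_sub_conj_le hs ht _)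
  · simpa only [h1p] using star_left_conjugate_nonneg (mul_star_self_nonneg x) (1 - p)
  · simpa only [h1p] using star_left_conjugate_le_conjugate hxx (1 - p)

theorem IsStarProjection.norm_sum_smul_sub_le_one (hp : IsStarProjection p) (hq : ∀ i, 0 ≤ q i)
    (hq1 : ∑ i, q i = 1) (y : ι → A) (hy : ∀ i, IsStarProjection (y i)) (hyp : ∀ i, y i * p = p) :
    ‖∑ i, (q i : ℂ) • y i - p‖ ≤ 1 := by
  have hq1' : ∑ i, (q i : ℂ) = 1 := by exact_mod_cast hq1
  have hsub : ∑ i, (q i : ℂ) • y i - p = ∑ i, (q i : ℂ) • (y i - p) := by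
    simp only [smul_sub, Finset.sum_sub_distrib, ← Finset.sum_smul, hq1', one_smul]
  calc ‖∑ i, (q i : ℂ) • y i - p‖ ≤ ∑ i, ‖(q i : ℂ) • (y i - p)‖ := hsub ▸ norm_sum_le _ _
    _ ≤ ∑ i, q i := Finset.sum_le_sum fun i _ => by
        rw [norm_smul, Complex.norm_of_nonneg (hq i)]
        exact mul_le_of_le_one_right (hq i) (hp.sub_of_mul_eq_right (hy i) (hyp i)).norm_le
    _ = 1 := hq1

end

theorem half_mul_one_sub_le_one_sub_of_sq_le {Δ a b : ℝ} (hΔ0 : 0 ≤ Δ) (hΔ1 : Δ ≤ 1) (ha : 0 ≤ a)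
    (hb0 : 0 ≤ b) (hb1 : b ≤ 1) (h : a ^ 2 ≤ (1 - Δ) ^ 2 + (1 - (1 - Δ) ^ 2) * b) :
    Δ / 2 * (1 - b) ≤ 1 - a := by
  have hr : 0 ≤ 1 - Δ / 2 * (1 - b) := by nlinarith
  have hsq : a ^ 2 ≤ (1 - Δ / 2 * (1 - b)) ^ 2 := by
    nlinarith [mul_nonneg (mul_nonneg hΔ0 (sub_nonneg.2 hb1)) (sub_nonneg.2 hΔ1),
      sq_nonneg (Δ * (1 - b))]
  linarith [(pow_le_pow_iff_left₀ ha hr two_ne_zero).1 hsq]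

theorem single_layer_gap_lower_bound_general
    (n : ℕ) (H : Type) [Fintype H]
    (q : H → ℝ) (hq : ∀ η, 0 ≤ q η) (hqsum : ∑ η, q η = 1)
    (P : Matrix (Fin n) (Fin n) ℂ) (hP_herm : Pᴴ = P) (hP_idem : P * P = P)
    (M Prj : H → Matrix (Fin n) (Fin n) ℂ)
    (hPrj_herm : ∀ η, (Prj η)ᴴ = Prj η) (hPrj_idem : ∀ η, Prj η * Prj η = Prj η)
    (hPM : ∀ η, P * M η = P)
    (hPrjP : ∀ η, Prj η * P = P)
    (Δloc : ℝ) (hΔ0 : 0 ≤ Δloc) (hΔ1 : Δloc ≤ 1)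
    (hgram : ∀ η,
      ((((1 - Δloc) ^ 2 : ℝ) : ℂ) • (1 : Matrix (Fin n) (Fin n) ℂ)
        + ((1 - (1 - Δloc) ^ 2 : ℝ) : ℂ) • Prj η
        - M η * (M η)ᴴ).PosSemidef) :
    1 - opNorm ((∑ η, (q η : ℂ) • M η) - P) ≥
      (Δloc / 2) * (1 - opNorm ((∑ η, (q η : ℂ) • Prj η) - P)) := by
  open scoped Matrix.Norms.L2Operator MatrixOrder in
  have hP : IsStarProjection P := ⟨hP_idem, hP_herm⟩
  have hPrj (η : H) : IsStarProjection (Prj η) := ⟨hPrj_idem η, hPrj_herm η⟩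
  have hgram' (η : H) : M η * star (M η) ≤
      (((1 - Δloc) ^ 2 : ℝ) : ℂ) • 1 + ((1 - (1 - Δloc) ^ 2 : ℝ) : ℂ) • Prj η := by
    rw [← sub_nonneg, Matrix.nonneg_iff_posSemidef]
    exact hgram η
  have ha := hP.norm_sum_smul_sub_sq_le q hq hqsum (sq_nonneg _) (by nlinarith) M Prj hPM hgram'
  have hb := hP.norm_sum_smul_sub_le_one q hq hqsum Prj hPrj hPrjP
  exact half_mul_one_sub_le_one_sub_of_sq_le hΔ0 hΔ1 (norm_nonneg _) (norm_nonneg _) hb ha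

/-- Proposition S1.  For a single-layer-connected non-Haar random circuit
with protocol moment operators `M η`, corresponding local-Haar projectors `Prj η`, global
Haar projector `P`, and local spectral gap `Δloc`, the spectral gap of the non-Haar layer
is at least `(Δloc / 2)` times the spectral gap of the local-Haar layer. -/
theorem single_layer_gap_lower_bound
    (n : ℕ) (hn : 1 ≤ n) (H : Type) [Fintype H]
    (q : H → ℝ) (hq : ∀ η, 0 ≤ q η) (hqsum : ∑ η, q η = 1)
    (P : Matrix (Fin n) (Fin n) ℂ) (hP_herm : Pᴴ = P) (hP_idem : P * P = P)
    (M Prj : H → Matrix (Fin n) (Fin n) ℂ)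
    (hPrj_herm : ∀ η, (Prj η)ᴴ = Prj η) (hPrj_idem : ∀ η, Prj η * Prj η = Prj η)
    (hMP : ∀ η, M η * P = P) (hPM : ∀ η, P * M η = P)
    (hPrjP : ∀ η, Prj η * P = P) (hPPrj : ∀ η, P * Prj η = P)
    (Δloc : ℝ) (hΔ0 : 0 ≤ Δloc) (hΔ1 : Δloc ≤ 1)
    (hgram : ∀ η,
      ((((1 - Δloc) ^ 2 : ℝ) : ℂ) • (1 : Matrix (Fin n) (Fin n) ℂ)
        + ((1 - (1 - Δloc) ^ 2 : ℝ) : ℂ) • Prj η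
        - M η * (M η)ᴴ).PosSemidef) :
    1 - opNorm ((∑ η, (q η : ℂ) • M η) - P) ≥
      (Δloc / 2) * (1 - opNorm ((∑ η, (q η : ℂ) • Prj η) - P)) :=
  single_layer_gap_lower_bound_general n H q hq hqsum P hP_herm hP_idem M Prj hPrj_herm hPrj_idem
    hPM hPrjP Δloc hΔ0 hΔ1 hgram
end

section
/- Let n ≥ 1, let P be an n×n orthogonal projection, let H be a finite index set with nonnegative weights (q_η)_{η∈H} summing to 1 and orthogonal projections (Π_η)_{η∈H} with Π_η P = P Π_η = P, and set M_H := ∑_η q_η Π_η and Δ_H := 1 − ‖M_H − P‖. For i = 1, …, L let M_{i,η} (η ∈ H) be n×n matrices with M_{i,η} P = P M_{i,η} = P and M_{i,η} M_{i,η}† ≤ (1−δ_i)²·I + (1−(1−δ_i)²)·Π_η for constants δ_i ∈ [0,1], and set M_i := ∑_η q_η M_{i,η}. Let N, t ≥ 1 be integers, d ≥ 2 an integer, ε ∈ (0,1], Δ_loc ∈ (0,1] with ∑_{i=1}^{L} δ_i ≥ L·Δ_loc, and suppose Δ_H > 0 and L ≥ 2·Δ_loc⁻¹·Δ_H⁻¹·(2·N·t·log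 d − log ε). Then ‖M_L ⋯ M_2 M_1 − P‖ ≤ ε·d^{−2Nt}. -/
/-!
In any unital C⋆-algebra ordered by positivity: for one layer `m = ∑ qᵢ • kᵢ`, the operator
Jensen inequality gives `(m - p)(m - p)⋆ ≤ ∑ qᵢ • (kᵢ kᵢ⋆ - p) ≤ (1 - σ)(1 - p) + σ (M_H - p)`,
and `M_H - p`, being compressed by `1 - p`, is at most `‖M_H - p‖ (1 - p)`. Hence
`‖m - p‖² ≤ 1 - σ Δ_H ≤ exp (-σ Δ_H)` with `σ = 1 - (1 - δ)² ≥ δ`. Since every layer fixes `p`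
from both sides, `∏ mᵢ - p = ∏ (mᵢ - p)`, so the deviations multiply to at most
`exp (-Δ_H ∑ δᵢ / 2)`, which the depth assumption bounds by `ε d^(-2Nt)`.
-/

open Matrix
open scoped ComplexOrder

section Averages

variable {ι R M : Type*} [Fintype ι] [Ring R] [AddCommGroup M] [Module R M]
  {q : ι → R}

theorem sum_smul_const_of_sum_eq_one (hq1 : ∑ i, q i = 1) (c : M) : ∑ i, q i • c = c := by
  rw [← Finset.sum_smul, hq1, one_smul]

theorem sum_smul_sub_const_of_sum_eq_one (hq1 : ∑ i, q i = 1) (f : ι → M) (c : M) :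
    ∑ i, q i • (f i - c) = ∑ i, q i • f i - c := by
  simp only [smul_sub, Finset.sum_sub_distrib, sum_smul_const_of_sum_eq_one hq1]

variable {A : Type*} [Ring A] [Module R A]

theorem sum_smul_mul_eq_of_mul_eq [IsScalarTower R A A] (hq1 : ∑ i, q i = 1) {x : ι → A} {p : A}
    (hx : ∀ i, x i * p = p) : (∑ i, q i • x i) * p = p := by
  simp only [Finset.sum_mul, smul_mul_assoc, hx, sum_smul_const_of_sum_eq_one hq1]

theorem mul_sum_smul_eq_of_mul_eq [SMulCommClass R A A] (hq1 : ∑ i, q i = 1) {x : ι → A} {p : A}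
    (hx : ∀ i, p * x i = p) : p * (∑ i, q i • x i) = p := by
  simp only [Finset.mul_sum, mul_smul_comm, hx, sum_smul_const_of_sum_eq_one hq1]

end Averages

section StarOrderedRing

variable {A : Type*} [Ring A] [StarRing A] [PartialOrder A] [StarOrderedRing A]
  [Algebra ℝ A] [StarModule ℝ A] [PosSMulMono ℝ A]

theorem sum_smul_mul_star_sum_le {ι : Type*} [Fintype ι] {q : ι → ℝ}
    (hq : ∀ i, 0 ≤ q i) (hq1 : ∑ i, q i = 1) (x : ι → A) :
    (∑ i, q i • x i) * star (∑ i, q i • x i) ≤ ∑ i, q i • (x i * star (x i)) := by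
  set m := ∑ i, q i • x i
  have hvariance : ∑ i, q i • ((x i - m) * star (x i - m))
      = ∑ i, q i • (x i * star (x i)) - m * star m := by
    have hleft : ∑ i, q i • (x i * star m) = m * star m := by
      simp only [m, Finset.sum_mul, smul_mul_assoc]
    have hright : ∑ i, q i • (m * star (x i)) = m * star m := by
      simp only [m, star_sum, star_smul, star_trivial, Finset.mul_sum, mul_smul_comm]
    simp only [star_sub, mul_sub, sub_mul, smul_sub, Finset.sum_sub_distrib, hleft, hright,
      sum_smul_const_of_sum_eq_one hq1]
    abel
  have hnonneg : 0 ≤ ∑ i, q i • ((x i - m) * star (x i - m)) :=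
    Finset.sum_nonneg fun i _ => smul_nonneg (hq i) (mul_star_self_nonneg _)
  rwa [hvariance, sub_nonneg] at hnonneg

end StarOrderedRing

theorem norm_list_prod_sub_le {R : Type*} [NormedRing R] {p : R} (hp : IsIdempotentElem p)
    (hp1 : ‖1 - p‖ ≤ 1) (l : List R) (hlp : ∀ x ∈ l, x * p = p) (hpl : ∀ x ∈ l, p * x = p) :
    ‖l.prod - p‖ ≤ (l.map fun x => ‖x - p‖).prod := by
  induction l with
  | nil => simpa using hp1
  | cons x l ih =>
    have hp_prod : p * l.prod = p :=
      List.prod_induction (p * · = p) (fun a b ha hb => by rw [← mul_assoc, ha, hb])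
        (mul_one p) fun y hy => hpl y (List.mem_cons_of_mem x hy)
    have hfactor : x * l.prod - p = (x - p) * (l.prod - p) := by
      rw [sub_mul, mul_sub, mul_sub, hlp x List.mem_cons_self, hp_prod, hp.eq]
      abel
    rw [List.prod_cons, List.map_cons, List.prod_cons, hfactor]
    exact (norm_mul_le _ _).trans <| mul_le_mul_of_nonneg_left
      (ih (fun y hy => hlp y (List.mem_cons_of_mem x hy))
        fun y hy => hpl y (List.mem_cons_of_mem x hy)) (norm_nonneg _)

theorem norm_ofFn_reverse_prod_sub_le {R : Type*} [NormedRing R] {p : R}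
    (hp : IsIdempotentElem p) (hp1 : ‖1 - p‖ ≤ 1) {L : ℕ} (x : Fin L → R)
    (hxp : ∀ i, x i * p = p) (hpx : ∀ i, p * x i = p) :
    ‖(List.ofFn x).reverse.prod - p‖ ≤ ∏ i, ‖x i - p‖ := by
  have h := norm_list_prod_sub_le hp hp1 (List.ofFn x).reverse
    (by simpa only [List.mem_reverse, List.forall_mem_ofFn_iff] using hxp)
    (by simpa only [List.mem_reverse, List.forall_mem_ofFn_iff] using hpx)
  simpa only [List.map_reverse, List.map_ofFn, List.prod_reverse, List.prod_ofFn,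
    Function.comp_def] using h

theorem IsStarProjection.sub_mul_star_sub {A : Type*} [Ring A] [StarRing A] {p k : A}
    (hp : IsStarProjection p) (hk : k * p = p) :
    (k - p) * star (k - p) = k * star k - p := by
  have hpk : p * star k = p := by
    simpa only [star_mul, hp.isSelfAdjoint.star_eq] using congr_arg star hk
  rw [star_sub, hp.isSelfAdjoint.star_eq, sub_mul, mul_sub, mul_sub, hk, hpk,
    hp.isIdempotentElem.eq]
  abel

theorem le_exp_neg_half_of_sq_le {x a : ℝ} (hx : 0 ≤ x) (h : x ^ 2 ≤ 1 - a) :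
    x ≤ Real.exp (-a / 2) := by
  rw [← pow_le_pow_iff_left₀ hx (Real.exp_pos _).le two_ne_zero, ← Real.exp_nat_mul]
  push_cast
  rw [mul_div_cancel₀ _ two_ne_zero]
  linarith [Real.add_one_le_exp (-a)]

section CStarAlgebra

variable {A : Type*} [CStarAlgebra A] [PartialOrder A] [StarOrderedRing A] {p : A}

theorem IsStarProjection.sub_le_norm_smul_one_sub (hp : IsStarProjection p) {x : A}
    (hx : IsSelfAdjoint x) (hxp : x * p = p) (hpx : p * x = p) :
    x - p ≤ ‖x - p‖ • (1 - p) := by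
  have hconj : star (1 - p) * (x - p) * (1 - p) = x - p := by
    rw [hp.one_sub.isSelfAdjoint.star_eq]
    simp only [sub_mul, mul_sub, one_mul, mul_one, hxp, hpx, hp.isIdempotentElem.eq]
    abel
  calc x - p = star (1 - p) * (x - p) * (1 - p) := hconj.symm
    _ ≤ ‖x - p‖ • (star (1 - p) * (1 - p)) :=
      CStarAlgebra.star_left_conjugate_le_norm_smul (hx.sub hp.isSelfAdjoint)
    _ = ‖x - p‖ • (1 - p) := by
      rw [hp.one_sub.isSelfAdjoint.star_eq, hp.one_sub.isIdempotentElem.eq]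

theorem IsStarProjection.norm_sum_smul_sub_sq_le_s4 (hp : IsStarProjection p)
    {ι : Type*} [Fintype ι] {q : ι → ℝ} (hq : ∀ i, 0 ≤ q i) (hq1 : ∑ i, q i = 1)
    {π : ι → A} (hπ : ∀ i, IsSelfAdjoint (π i)) (hπp : ∀ i, π i * p = p)
    (hpπ : ∀ i, p * π i = p) {k : ι → A} (hkp : ∀ i, k i * p = p) {σ : ℝ} (hσ0 : 0 ≤ σ)
    (hσ1 : σ ≤ 1) (hk : ∀ i, k i * star (k i) ≤ (1 - σ) • 1 + σ • π i) :
    ‖∑ i, q i • k i - p‖ ^ 2 ≤ 1 - σ * (1 - ‖∑ i, q i • π i - p‖) := by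
  set a := ∑ i, q i • π i
  set r := 1 - σ * (1 - ‖a - p‖)
  have hgap : a - p ≤ ‖a - p‖ • (1 - p) :=
    hp.sub_le_norm_smul_one_sub (isSelfAdjoint_sum _ fun i _ => .smul (.all (q i)) (hπ i))
      (sum_smul_mul_eq_of_mul_eq hq1 hπp) (mul_sum_smul_eq_of_mul_eq hq1 hpπ)
  have hr : 0 ≤ r := by nlinarith [norm_nonneg (a - p)]
  have hle : (∑ i, q i • k i - p) * star (∑ i, q i • k i - p) ≤ algebraMap ℝ A r :=
    calc (∑ i, q i • k i - p) * star (∑ i, q i • k i - p)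
        = (∑ i, q i • (k i - p)) * star (∑ i, q i • (k i - p)) := by
          rw [sum_smul_sub_const_of_sum_eq_one hq1]
      _ ≤ ∑ i, q i • ((k i - p) * star (k i - p)) := sum_smul_mul_star_sum_le hq hq1 _
      _ = ∑ i, q i • (k i * star (k i) - p) := by
          simp only [hp.sub_mul_star_sub (hkp _)]
      _ ≤ ∑ i, q i • ((1 - σ) • 1 + σ • π i - p) :=
          Finset.sum_le_sum fun i _ =>
            smul_le_smul_of_nonneg_left (sub_le_sub_right (hk i) _) (hq i)
      _ = (1 - σ) • (1 - p) + σ • (a - p) := by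
          have hσa : ∑ i, q i • σ • π i = σ • a := by
            simp only [a, Finset.smul_sum, smul_comm σ]
          rw [sum_smul_sub_const_of_sum_eq_one hq1]
          simp only [smul_add]
          rw [Finset.sum_add_distrib, sum_smul_const_of_sum_eq_one hq1, hσa]
          simp only [smul_sub, sub_smul, one_smul]
          abel
      _ ≤ (1 - σ) • (1 - p) + σ • (‖a - p‖ • (1 - p)) := by gcongr
      _ = r • (1 - p) := by
          simp only [smul_smul, ← add_smul, r]
          ring_nf
      _ ≤ r • 1 := smul_le_smul_of_nonneg_left (sub_le_self _ hp.nonneg) hr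
      _ = algebraMap ℝ A r := (Algebra.algebraMap_eq_smul_one r).symm
  rw [sq, ← CStarRing.norm_self_mul_star]
  exact (CStarAlgebra.norm_le_iff_le_algebraMap _ hr (mul_star_self_nonneg _)).mpr hle

theorem IsStarProjection.norm_sum_smul_sub_le_exp (hp : IsStarProjection p)
    {ι : Type*} [Fintype ι] {q : ι → ℝ} (hq : ∀ i, 0 ≤ q i) (hq1 : ∑ i, q i = 1)
    {π : ι → A} (hπ : ∀ i, IsSelfAdjoint (π i)) (hπp : ∀ i, π i * p = p)
    (hpπ : ∀ i, p * π i = p) (hgap : 0 ≤ 1 - ‖∑ i, q i • π i - p‖)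
    {k : ι → A} (hkp : ∀ i, k i * p = p) {δ : ℝ} (hδ0 : 0 ≤ δ) (hδ1 : δ ≤ 1)
    (hk : ∀ i, k i * star (k i) ≤ (1 - δ) ^ 2 • 1 + (1 - (1 - δ) ^ 2) • π i) :
    ‖∑ i, q i • k i - p‖ ≤ Real.exp (-(δ * (1 - ‖∑ i, q i • π i - p‖)) / 2) := by
  have hsq := hp.norm_sum_smul_sub_sq_le_s4 hq hq1 hπ hπp hpπ hkp (σ := 1 - (1 - δ) ^ 2)
    (by nlinarith) (by nlinarith) (by simpa only [sub_sub_cancel] using hk)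
  refine (le_exp_neg_half_of_sq_le (norm_nonneg _) hsq).trans (Real.exp_le_exp.mpr ?_)
  have hδσ : δ ≤ 1 - (1 - δ) ^ 2 := by nlinarith
  linarith [mul_le_mul_of_nonneg_right hδσ hgap]

end CStarAlgebra

theorem Real.exp_neg_nat_mul_log_sub_log (k : ℕ) {d ε : ℝ} (hd : 0 < d) (hε : 0 < ε) :
    Real.exp (-(k * Real.log d - Real.log ε)) = ε * (d ^ k)⁻¹ := by
  rw [neg_sub, Real.exp_sub, Real.exp_log hε, Real.exp_nat_mul, Real.exp_log hd, div_eq_mul_inv]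

theorem le_mul_div_two_of_depth {L Δloc Δ S R : ℝ} (hΔloc : 0 < Δloc) (hΔ : 0 < Δ)
    (hS : L * Δloc ≤ S) (hL : 2 * Δloc⁻¹ * Δ⁻¹ * R ≤ L) : R ≤ S * Δ / 2 := by
  have hR : R = 2 * Δloc⁻¹ * Δ⁻¹ * R * (Δloc * Δ / 2) := by field_simp
  rw [hR]
  calc 2 * Δloc⁻¹ * Δ⁻¹ * R * (Δloc * Δ / 2) ≤ L * (Δloc * Δ / 2) := by gcongr
    _ ≤ S * Δ / 2 := by nlinarith

theorem single_layer_connected_design_depth_general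
    (n : ℕ) (H : Type) [Fintype H]
    (P : Matrix (Fin n) (Fin n) ℂ) (hP_herm : Pᴴ = P) (hP_idem : P * P = P)
    (q : H → ℝ) (hq : ∀ η, 0 ≤ q η) (hqsum : ∑ η, q η = 1)
    (Prj : H → Matrix (Fin n) (Fin n) ℂ)
    (hPrj_herm : ∀ η, (Prj η)ᴴ = Prj η)
    (hPrjP : ∀ η, Prj η * P = P) (hPPrj : ∀ η, P * Prj η = P)
    (L : ℕ)
    (M : Fin L → H → Matrix (Fin n) (Fin n) ℂ)
    (hMP : ∀ i η, M i η * P = P) (hPM : ∀ i η, P * M i η = P)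
    (δ : Fin L → ℝ) (hδ0 : ∀ i, 0 ≤ δ i) (hδ1 : ∀ i, δ i ≤ 1)
    (hgram : ∀ i η,
      ((((1 - δ i) ^ 2 : ℝ) : ℂ) • (1 : Matrix (Fin n) (Fin n) ℂ)
        + ((1 - (1 - δ i) ^ 2 : ℝ) : ℂ) • Prj η
        - M i η * (M i η)ᴴ).PosSemidef)
    (N t d : ℕ) (hd : 2 ≤ d)
    (ε : ℝ) (hε0 : 0 < ε)
    (Δloc : ℝ) (hΔloc0 : 0 < Δloc)
    (hav : (∑ i, δ i) ≥ (L : ℝ) * Δloc)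
    (hΔH : 0 < 1 - opNorm ((∑ η, (q η : ℂ) • Prj η) - P))
    (hL : (L : ℝ) ≥ 2 * Δloc⁻¹ * (1 - opNorm ((∑ η, (q η : ℂ) • Prj η) - P))⁻¹ *
      (2 * N * t * Real.log d - Real.log ε)) :
    opNorm ((List.ofFn fun i => ∑ η, (q η : ℂ) • M i η).reverse.prod - P) ≤
      ε * ((d : ℝ) ^ (2 * N * t))⁻¹ := by
  -- Matrices form a C⋆-algebra whose norm is `opNorm` and whose order is the Loewner order.
  open scoped Matrix.Norms.L2Operator MatrixOrder in
  · simp only [opNorm, ← Matrix.cstar_norm_def, Complex.coe_smul] at hgram hΔH hL ⊢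
    set Δ := 1 - ‖∑ η, q η • Prj η - P‖
    have hP : IsStarProjection P := ⟨hP_idem, hP_herm⟩
    have hlayer (i : Fin L) : ‖∑ η, q η • M i η - P‖ ≤ Real.exp (-(δ i * Δ) / 2) :=
      hP.norm_sum_smul_sub_le_exp hq hqsum hPrj_herm hPrjP hPPrj hΔH.le (hMP i) (hδ0 i) (hδ1 i)
        (hgram i)
    have hd0 : (0 : ℝ) < d := by positivity
    calc ‖(List.ofFn fun i => ∑ η, q η • M i η).reverse.prod - P‖
        ≤ ∏ i, ‖∑ η, q η • M i η - P‖ :=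
          norm_ofFn_reverse_prod_sub_le hP.isIdempotentElem (hP.one_sub.norm_le _) _
            (fun i => sum_smul_mul_eq_of_mul_eq hqsum (hMP i))
            (fun i => mul_sum_smul_eq_of_mul_eq hqsum (hPM i))
      _ ≤ ∏ i, Real.exp (-(δ i * Δ) / 2) :=
          Finset.prod_le_prod (fun _ _ => norm_nonneg _) fun i _ => hlayer i
      _ = Real.exp (-((∑ i, δ i) * Δ / 2)) := by
          rw [← Real.exp_sum, Finset.sum_mul, Finset.sum_div, ← Finset.sum_neg_distrib]
          simp only [neg_div]
      _ ≤ Real.exp (-(((2 * N * t : ℕ) : ℝ) * Real.log d - Real.log ε)) := by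
          push_cast
          exact Real.exp_le_exp.mpr (neg_le_neg (le_mul_div_two_of_depth hΔloc0 hΔH hav hL))
      _ = ε * ((d : ℝ) ^ (2 * N * t))⁻¹ := Real.exp_neg_nat_mul_log_sub_log _ hd0 hε0

/-- Theorem S1 / Theorem 1 of the main text.
A single-layer-connected non-Haar random circuit, whose layers `M i = ∑ η, q η • M i η`
all share the same local-Haar counterpart `M_H = ∑ η, q η • Prj η`, with averaged local
spectral gap at least `Δloc`, forms an `ε`-approximate unitary `t`-design at depth
`L ≥ 2 Δloc⁻¹ Δ_H⁻¹ (2 N t log d - log ε)`. -/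
theorem single_layer_connected_design_depth
    (n : ℕ) (hn : 1 ≤ n) (H : Type) [Fintype H]
    (P : Matrix (Fin n) (Fin n) ℂ) (hP_herm : Pᴴ = P) (hP_idem : P * P = P)
    (q : H → ℝ) (hq : ∀ η, 0 ≤ q η) (hqsum : ∑ η, q η = 1)
    (Prj : H → Matrix (Fin n) (Fin n) ℂ)
    (hPrj_herm : ∀ η, (Prj η)ᴴ = Prj η) (hPrj_idem : ∀ η, Prj η * Prj η = Prj η)
    (hPrjP : ∀ η, Prj η * P = P) (hPPrj : ∀ η, P * Prj η = P)
    (L : ℕ)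
    (M : Fin L → H → Matrix (Fin n) (Fin n) ℂ)
    (hMP : ∀ i η, M i η * P = P) (hPM : ∀ i η, P * M i η = P)
    (δ : Fin L → ℝ) (hδ0 : ∀ i, 0 ≤ δ i) (hδ1 : ∀ i, δ i ≤ 1)
    (hgram : ∀ i η,
      ((((1 - δ i) ^ 2 : ℝ) : ℂ) • (1 : Matrix (Fin n) (Fin n) ℂ)
        + ((1 - (1 - δ i) ^ 2 : ℝ) : ℂ) • Prj η
        - M i η * (M i η)ᴴ).PosSemidef)
    (N t d : ℕ) (hN : 1 ≤ N) (ht : 1 ≤ t) (hd : 2 ≤ d)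
    (ε : ℝ) (hε0 : 0 < ε) (hε1 : ε ≤ 1)
    (Δloc : ℝ) (hΔloc0 : 0 < Δloc) (hΔloc1 : Δloc ≤ 1)
    (hav : (∑ i, δ i) ≥ (L : ℝ) * Δloc)
    (hΔH : 0 < 1 - opNorm ((∑ η, (q η : ℂ) • Prj η) - P))
    (hL : (L : ℝ) ≥ 2 * Δloc⁻¹ * (1 - opNorm ((∑ η, (q η : ℂ) • Prj η) - P))⁻¹ *
      (2 * N * t * Real.log d - Real.log ε)) :
    opNorm ((List.ofFn fun i => ∑ η, (q η : ℂ) • M i η).reverse.prod - P) ≤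
      ε * ((d : ℝ) ^ (2 * N * t))⁻¹ :=
  single_layer_connected_design_depth_general n H P hP_herm hP_idem q hq hqsum Prj hPrj_herm hPrjP
    hPPrj L M hMP hPM δ hδ0 hδ1 hgram N t d hd ε hε0 Δloc hΔloc0 hav hΔH hL
end

section
/- Let n ≥ 1 and let P_A, P_B, P_C be n×n orthogonal projections satisfying P_A P_C = P_C P_A = P_C and P_B P_C = P_C P_B = P_C. Let M be an n×n complex matrix with M P_A = P_A M = P_A and ‖M − P_A‖ ≤ 1. Define α := 1 − ‖M − P_A‖² and γ := 1 − ‖P_A P_B − P_C‖². Then M P_B M† ≤ (1 − α·γ)·I + α·γ·P_C, i.e. the matrix (1−αγ)·I + αγ·P_C − M P_B M† is positive semidefinite. -/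
/-!
Put `K = P_B - P_C`, a projection since `P_C ≤ P_B`, and `E = M K = M P_B - P_C`; then
`M P_B M† = E E† + P_C`. Writing `M = P_A + N` with `N = N (1 - P_A)` gives
`M† M ≤ P_A + ‖N‖² (1 - P_A)`, and `P_A K = P_A P_B - P_C`, so
`E† E = K M† M K ≤ (‖N‖² + (1 - ‖N‖²) ‖P_A P_B - P_C‖²) K = (1 - αγ) K`.
Hence `‖E‖² ≤ 1 - αγ`, and as `P_C E = 0` this upgrades to
`E E† ≤ (1 - αγ) (1 - P_C)`.
The argument uses only the C⋆-identity and the order, so it runs in any C⋆-algebra.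
-/

open Matrix
open scoped ComplexOrder

section
variable {A : Type*} [CStarAlgebra A] [PartialOrder A] [StarOrderedRing A]

lemma norm_sq_le_of_star_mul_self_le {x : A} {c : ℝ} (hc : 0 ≤ c)
    (h : star x * x ≤ algebraMap ℝ A c) : ‖x‖ ^ 2 ≤ c := by
  rw [sq, ← CStarRing.norm_star_mul_self]
  exact (CStarAlgebra.norm_le_iff_le_algebraMap _ hc (star_mul_self_nonneg x)).2 h

namespace IsStarProjection

lemma star_mul_self_le_norm_sq_smul {p x : A} (hp : IsStarProjection p) (hx : x * p = x) :
    star x * x ≤ ‖x‖ ^ 2 • p :=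
  calc star x * x = star p * (star x * x) * p := by
        rw [← mul_assoc, ← star_mul, hx, mul_assoc, hx]
    _ ≤ star p * algebraMap ℝ A (‖x‖ ^ 2) * p :=
        star_left_conjugate_le_conjugate CStarAlgebra.star_mul_le_algebraMap_norm_sq p
    _ = ‖x‖ ^ 2 • p := by
        rw [Algebra.algebraMap_eq_smul_one, mul_smul_one, smul_mul_assoc, hp.isSelfAdjoint.star_eq,
          hp.isIdempotentElem.eq]

lemma mul_star_self_le_norm_sq_smul_one_sub {p x : A} (hp : IsStarProjection p)
    (hx : p * x = 0) : x * star x ≤ ‖x‖ ^ 2 • (1 - p) := by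
  have hx' : star x * (1 - p) = star x := by
    rw [mul_sub, mul_one, ← hp.isSelfAdjoint.star_eq, ← star_mul, hx, star_zero, sub_zero]
  simpa using hp.one_sub.star_mul_self_le_norm_sq_smul hx'

lemma star_mul_self_le_add_norm_sq_smul {p m : A} (hp : IsStarProjection p)
    (hmp : m * p = p) (hpm : p * m = p) :
    star m * m ≤ p + ‖m - p‖ ^ 2 • (1 - p) := by
  have hker : (m - p) * (1 - p) = m - p := by
    rw [mul_sub, mul_one, sub_mul, hmp, hp.isIdempotentElem.eq, sub_self, sub_zero]
  have hexpand : star m * m = p + star (m - p) * (m - p) := by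
    have hpN : p * (m - p) = 0 := by rw [mul_sub, hpm, hp.isIdempotentElem.eq, sub_self]
    have hNp : star (m - p) * p = 0 := by
      rw [← hp.isSelfAdjoint.star_eq, ← star_mul, hp.isSelfAdjoint.star_eq, hpN, star_zero]
    conv_lhs => rw [← add_sub_cancel p m]
    rw [star_add, add_mul, mul_add, mul_add, hp.isSelfAdjoint.star_eq, hp.isIdempotentElem.eq,
      hpN, hNp, add_zero, zero_add]
  rw [hexpand]
  exact add_le_add_right (hp.one_sub.star_mul_self_le_norm_sq_smul hker) p

lemma star_mul_self_mul_sub_le {pa pb pc m : A} (hpa : IsStarProjection pa)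
    (hpb : IsStarProjection pb) (hpc : IsStarProjection pc) (hac : pa * pc = pc)
    (hbc : pb * pc = pc)
    (hma : m * pa = pa) (ham : pa * m = pa) (hm : ‖m - pa‖ ≤ 1) :
    star (m * (pb - pc)) * (m * (pb - pc)) ≤
      (1 - (1 - ‖m - pa‖ ^ 2) * (1 - ‖pa * pb - pc‖ ^ 2)) • (pb - pc) := by
  set K := pb - pc
  have hK : IsStarProjection K := hpc.sub_of_mul_eq_right hpb hbc
  have hpaK : pa * K = pa * pb - pc := by rw [mul_sub, hac]
  have hKpaK : K * pa * K ≤ ‖pa * pb - pc‖ ^ 2 • K := by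
    have h := hK.star_mul_self_le_norm_sq_smul (x := pa * K)
      (by rw [mul_assoc, hK.isIdempotentElem.eq])
    rwa [star_mul, hpa.isSelfAdjoint.star_eq, hK.isSelfAdjoint.star_eq, mul_assoc, ← mul_assoc pa,
      hpa.isIdempotentElem.eq, ← mul_assoc, hpaK] at h
  have hr : 0 ≤ 1 - ‖m - pa‖ ^ 2 := sub_nonneg.2 (pow_le_one₀ (norm_nonneg _) hm)
  calc star (m * K) * (m * K) = star K * (star m * m) * K := by
        rw [star_mul, mul_assoc, mul_assoc, mul_assoc]
    _ ≤ star K * (pa + ‖m - pa‖ ^ 2 • (1 - pa)) * K :=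
        star_left_conjugate_le_conjugate (hpa.star_mul_self_le_add_norm_sq_smul hma ham) K
    _ = ‖m - pa‖ ^ 2 • K + (1 - ‖m - pa‖ ^ 2) • (K * pa * K) := by
        simp only [hK.isSelfAdjoint.star_eq, mul_add, add_mul, mul_sub, sub_mul, mul_smul_comm,
          smul_mul_assoc, mul_one, hK.isIdempotentElem.eq, sub_smul, one_smul, smul_sub]
        abel
    _ ≤ ‖m - pa‖ ^ 2 • K + (1 - ‖m - pa‖ ^ 2) • (‖pa * pb - pc‖ ^ 2 • K) := by
        gcongr
    _ = _ := by
        rw [smul_smul, ← add_smul]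
        congr 1
        ring

lemma mul_mul_star_le {pa pb pc m : A} (hpa : IsStarProjection pa)
    (hpb : IsStarProjection pb) (hpc : IsStarProjection pc) (hac : pa * pc = pc)
    (hbc : pb * pc = pc)
    (hma : m * pa = pa) (ham : pa * m = pa) (hm : ‖m - pa‖ ≤ 1) :
    m * pb * star m ≤ (1 - (1 - ‖m - pa‖ ^ 2) * (1 - ‖pa * pb - pc‖ ^ 2)) • (1 : A)
      + ((1 - ‖m - pa‖ ^ 2) * (1 - ‖pa * pb - pc‖ ^ 2)) • pc := by
  set β := 1 - (1 - ‖m - pa‖ ^ 2) * (1 - ‖pa * pb - pc‖ ^ 2) with hβ_def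
  set E := m * (pb - pc)
  have hK : IsStarProjection (pb - pc) := hpc.sub_of_mul_eq_right hpb hbc
  have hβ : 0 ≤ β := by
    have hr : ‖m - pa‖ ^ 2 ≤ 1 := pow_le_one₀ (norm_nonneg _) hm
    nlinarith [mul_nonneg (sub_nonneg.2 hr) (sq_nonneg ‖pa * pb - pc‖), sq_nonneg ‖m - pa‖]
  have hca : pc * pa = pc := (hpc.le_iff_mul_eq_left hpa).1 ((hpc.le_iff_mul_eq_right hpa).2 hac)
  have hcb : pc * pb = pc := (hpc.le_iff_mul_eq_left hpb).1 ((hpc.le_iff_mul_eq_right hpb).2 hbc)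
  have hmc : m * pc = pc := by rw [← hac, ← mul_assoc, hma]
  have hcm : pc * m = pc := by rw [← hca, mul_assoc, ham]
  have hnormE : ‖E‖ ^ 2 ≤ β := by
    refine norm_sq_le_of_star_mul_self_le hβ ?_
    calc star E * E ≤ β • (pb - pc) := star_mul_self_mul_sub_le hpa hpb hpc hac hbc hma ham hm
      _ ≤ algebraMap ℝ A β := by
        rw [Algebra.algebraMap_eq_smul_one]
        exact smul_le_smul_of_nonneg_left hK.le_one hβ
  have hEE : E * star E ≤ β • (1 - pc) := by
    have hcE : pc * E = 0 := by
      rw [← mul_assoc, hcm, mul_sub, hcb, hpc.isIdempotentElem.eq, sub_self]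
    exact (hpc.mul_star_self_le_norm_sq_smul_one_sub hcE).trans
      (smul_le_smul_of_nonneg_right hnormE hpc.one_sub_nonneg)
  have hsplit : m * pb * star m = E * star E + pc := by
    have hcm' : pc * star m = pc := by
      simpa [hpc.isSelfAdjoint.star_eq] using congr(star $hmc)
    have hEE' : E * star E = m * (pb - pc) * star m := by
      rw [star_mul, hK.isSelfAdjoint.star_eq, mul_assoc, ← mul_assoc (pb - pc),
        hK.isIdempotentElem.eq, ← mul_assoc]
    rw [hEE', mul_sub, sub_mul, hmc, hcm', sub_add_cancel]
  calc m * pb * star m = E * star E + pc := hsplit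
    _ ≤ β • (1 - pc) + pc := by gcongr
    _ = _ := by
      rw [hβ_def, smul_sub, sub_smul, sub_smul, one_smul, one_smul]
      abel

end IsStarProjection
end

-- Under the L2 operator norm (`opNorm` is definitionally its norm) and the Loewner order,
-- square complex matrices form an ordered C⋆-algebra.
open scoped Matrix.Norms.L2Operator MatrixOrder in
theorem sandwich_bound_general
    (n : ℕ)
    (PA PB PC : Matrix (Fin n) (Fin n) ℂ)
    (hPA_herm : PAᴴ = PA) (hPA_idem : PA * PA = PA)
    (hPB_herm : PBᴴ = PB) (hPB_idem : PB * PB = PB)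
    (hPC_herm : PCᴴ = PC) (hPC_idem : PC * PC = PC)
    (hAC : PA * PC = PC)
    (hBC : PB * PC = PC)
    (M : Matrix (Fin n) (Fin n) ℂ)
    (hMA : M * PA = PA) (hAM : PA * M = PA)
    (hMnorm : opNorm (M - PA) ≤ 1) :
    ((((1 - (1 - opNorm (M - PA) ^ 2) * (1 - opNorm (PA * PB - PC) ^ 2) : ℝ)) : ℂ) •
        (1 : Matrix (Fin n) (Fin n) ℂ)
      + (((1 - opNorm (M - PA) ^ 2) * (1 - opNorm (PA * PB - PC) ^ 2) : ℝ) : ℂ) • PC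
      - M * PB * Mᴴ).PosSemidef := by
  have h := IsStarProjection.mul_mul_star_le ⟨hPA_idem, hPA_herm⟩ ⟨hPB_idem, hPB_herm⟩
    ⟨hPC_idem, hPC_herm⟩ hAC hBC hMA hAM hMnorm
  simp only [← Complex.coe_smul] at h
  exact Matrix.le_iff.mp h

/-- Lemma S8.  With `P_A, P_B, P_C` orthogonal projections satisfying
`P_A P_C = P_C P_A = P_C`, `P_B P_C = P_C P_B = P_C`, and `M` a matrix with
`M P_A = P_A M = P_A`, `‖M - P_A‖ ≤ 1`, setting `α := 1 - ‖M - P_A‖²` and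
`γ := 1 - ‖P_A P_B - P_C‖²`, we have `M P_B Mᴴ ≤ (1 - αγ)·I + αγ·P_C`. -/
theorem sandwich_bound
    (n : ℕ) (hn : 1 ≤ n)
    (PA PB PC : Matrix (Fin n) (Fin n) ℂ)
    (hPA_herm : PAᴴ = PA) (hPA_idem : PA * PA = PA)
    (hPB_herm : PBᴴ = PB) (hPB_idem : PB * PB = PB)
    (hPC_herm : PCᴴ = PC) (hPC_idem : PC * PC = PC)
    (hAC : PA * PC = PC) (hCA : PC * PA = PC)
    (hBC : PB * PC = PC) (hCB : PC * PB = PC)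
    (M : Matrix (Fin n) (Fin n) ℂ)
    (hMA : M * PA = PA) (hAM : PA * M = PA)
    (hMnorm : opNorm (M - PA) ≤ 1) :
    ((((1 - (1 - opNorm (M - PA) ^ 2) * (1 - opNorm (PA * PB - PC) ^ 2) : ℝ)) : ℂ) •
        (1 : Matrix (Fin n) (Fin n) ℂ)
      + (((1 - opNorm (M - PA) ^ 2) * (1 - opNorm (PA * PB - PC) ^ 2) : ℝ) : ℂ) • PC
      - M * PB * Mᴴ).PosSemidef :=
  sandwich_bound_general n PA PB PC hPA_herm hPA_idem hPB_herm hPB_idem hPC_herm hPC_idem hAC hBC M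
    hMA hAM hMnorm
end

section
/- Let n ≥ 1, l ≥ 1, let Π_1, …, Π_l and C_1, …, C_l be n×n orthogonal projections such that C_1 = Π_1; for each j ∈ {2,…,l}: Π_j C_j = C_j Π_j = C_j and C_{j−1} C_j = C_j C_{j−1} = C_j; and for every j ∈ {1,…,l}: Π_j C_l = C_l Π_j = C_l. For j ∈ {2,…,l} set γ_j := 1 − ‖Π_j C_{j−1} − C_j‖². Then (1 − Δ)² ≤ 1 − ∏_{j=2}^{l} γ_j, where Δ := 1 − ‖Π_l ⋯ Π_2 Π_1 − C_l‖. -/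
open ContinuousLinearMap
open scoped InnerProductSpace

set_option maxHeartbeats 2000000 in
lemma scalar_key (s t g ρ μ ζ cv E m : ℝ)
    (hs0 : 0 ≤ s) (ht0 : 0 ≤ t) (ht1 : t ≤ 1) (hg0 : 0 ≤ g) (hg : g ^ 2 = 1 - s ^ 2)
    (hρ : 0 < ρ) (hμ : 0 ≤ μ) (hζ0 : 0 ≤ ζ) (hζ : ζ ≤ t * μ)
    (hcv0 : 0 ≤ cv) (hcv : cv ≤ s * (ρ * m)) (hm0 : 0 < m)
    (hE0 : 0 ≤ E) (hE : E ^ 2 = ρ ^ 2 * (ρ ^ 2 * m ^ 2 - cv ^ 2))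
    (hm : ρ ^ 2 * m ^ 2 ≤ ρ ^ 2 * cv + ζ * E) :
    m ^ 2 ≤ (1 - (1 - s ^ 2) * (1 - t ^ 2)) * (ρ ^ 2 + μ ^ 2) := by
  have hs1 : s ≤ 1 := by nlinarith [sq_nonneg g]
  have htarget : (1 - (1 - s ^ 2) * (1 - t ^ 2)) = s ^ 2 + g ^ 2 * t ^ 2 := by
    rw [hg]; ring
  rw [htarget]
  have hcv2 : cv ^ 2 ≤ s ^ 2 * (ρ * m) ^ 2 := by nlinarith
  rcases le_or_gt (s * ζ) (g * ρ) with hcase | hcase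
  · -- Case B : m ≤ s ρ + g ζ
    have hEg : g * (ρ ^ 2 * m) ≤ E := by
      have hgg : (g * (ρ ^ 2 * m)) ^ 2 = (ρ ^ 2 * m) ^ 2 - s ^ 2 * (ρ ^ 2 * m) ^ 2 := by
        rw [show (g * (ρ ^ 2 * m)) ^ 2 = g ^ 2 * (ρ ^ 2 * m) ^ 2 by ring, hg]; ring
      have hsub : ρ ^ 2 * cv ^ 2 ≤ ρ ^ 2 * (s ^ 2 * (ρ * m) ^ 2) :=
        mul_le_mul_of_nonneg_left hcv2 (sq_nonneg ρ)
      have h1 : (g * (ρ ^ 2 * m)) ^ 2 ≤ E ^ 2 := by rw [hE, hgg]; nlinarith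
      have h2 : 0 ≤ g * (ρ ^ 2 * m) := by positivity
      nlinarith
    have h1 : ζ * (s * (ρ * m) + cv) ≤ E + g * (ρ ^ 2 * m) := by
      have hb : ζ * (s * (ρ * m)) ≤ g * (ρ ^ 2 * m) := by
        have := mul_le_mul_of_nonneg_right hcase (show (0:ℝ) ≤ ρ * m by positivity)
        nlinarith
      have hc : ζ * cv ≤ ζ * (s * (ρ * m)) := mul_le_mul_of_nonneg_left hcv hζ0
      nlinarith
    have key : ρ ^ 2 * cv + ζ * E ≤ ρ ^ 2 * ((s * ρ + g * ζ) * m) := by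
      rcases eq_or_lt_of_le (by positivity : (0:ℝ) ≤ E + g * (ρ ^ 2 * m)) with h0 | h0
      · have hgm0 : 0 ≤ g * (ρ ^ 2 * m) := by positivity
        have hE' : E = 0 := by linarith
        have hcc : ρ ^ 2 * cv ≤ ρ ^ 2 * (s * (ρ * m)) :=
          mul_le_mul_of_nonneg_left hcv (sq_nonneg ρ)
        have : 0 ≤ ρ ^ 2 * (g * ζ * m) := by positivity
        nlinarith
      · have hEid : (E - g * (ρ ^ 2 * m)) * (E + g * (ρ ^ 2 * m))
            = ρ ^ 2 * ((s * (ρ * m) - cv) * (s * (ρ * m) + cv)) := by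
          have : (E - g * (ρ ^ 2 * m)) * (E + g * (ρ ^ 2 * m))
              = E ^ 2 - g ^ 2 * (ρ ^ 2 * m) ^ 2 := by ring
          rw [this, hE, hg]; ring
        have h2' : (ζ * (E - g * (ρ ^ 2 * m))) * (E + g * (ρ ^ 2 * m))
            ≤ ((s * (ρ * m) - cv) * ρ ^ 2) * (E + g * (ρ ^ 2 * m)) := by
          have hnn : 0 ≤ s * (ρ * m) - cv := by linarith
          have e1 : (ζ * (E - g * (ρ ^ 2 * m))) * (E + g * (ρ ^ 2 * m))
              = (s * (ρ * m) - cv) * (ζ * (ρ ^ 2 * (s * (ρ * m) + cv))) := by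
            rw [show (ζ * (E - g * (ρ ^ 2 * m))) * (E + g * (ρ ^ 2 * m))
                = ζ * ((E - g * (ρ ^ 2 * m)) * (E + g * (ρ ^ 2 * m))) by ring, hEid]
            ring
          have e2 : ζ * (ρ ^ 2 * (s * (ρ * m) + cv)) ≤ ρ ^ 2 * (E + g * (ρ ^ 2 * m)) := by
            have := mul_le_mul_of_nonneg_left h1 (sq_nonneg ρ)
            nlinarith
          calc (ζ * (E - g * (ρ ^ 2 * m))) * (E + g * (ρ ^ 2 * m))
              = (s * (ρ * m) - cv) * (ζ * (ρ ^ 2 * (s * (ρ * m) + cv))) := e1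
            _ ≤ (s * (ρ * m) - cv) * (ρ ^ 2 * (E + g * (ρ ^ 2 * m))) :=
                mul_le_mul_of_nonneg_left e2 hnn
            _ = ((s * (ρ * m) - cv) * ρ ^ 2) * (E + g * (ρ ^ 2 * m)) := by ring
        have h3 : ζ * (E - g * (ρ ^ 2 * m)) ≤ (s * (ρ * m) - cv) * ρ ^ 2 :=
          le_of_mul_le_mul_right h2' h0
        nlinarith
    have hmle : m ≤ s * ρ + g * ζ := by
      have h5 : ρ ^ 2 * m ^ 2 ≤ ρ ^ 2 * ((s * ρ + g * ζ) * m) := le_trans hm key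
      have h4 : m ^ 2 ≤ (s * ρ + g * ζ) * m := by
        have hρ2 : (0:ℝ) < ρ ^ 2 := by positivity
        exact le_of_mul_le_mul_left (by linarith) hρ2
      exact le_of_mul_le_mul_right (by nlinarith) hm0
    have hmle2 : m ≤ s * ρ + g * (t * μ) := by
      have : g * ζ ≤ g * (t * μ) := mul_le_mul_of_nonneg_left hζ hg0
      linarith
    have hsq : m ^ 2 ≤ (s * ρ + g * (t * μ)) ^ 2 := by nlinarith
    nlinarith [sq_nonneg (s * μ - g * t * ρ)]
  · -- Case A : m² ≤ ρ² + ζ²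
    have hCS : (ρ ^ 2 * m ^ 2) * (ρ ^ 2 * m ^ 2) ≤ ((ρ ^ 2 * m) * (ρ ^ 2 * m)) * (ρ ^ 2 + ζ ^ 2) := by
      have h1 : (ρ ^ 2 * cv + ζ * E) ^ 2 ≤ (cv ^ 2 * ρ ^ 2 + E ^ 2) * (ρ ^ 2 + ζ ^ 2) := by
        nlinarith [sq_nonneg (cv * ζ * ρ - E * ρ)]
      have h2 : cv ^ 2 * ρ ^ 2 + E ^ 2 = (ρ ^ 2 * m) * (ρ ^ 2 * m) := by rw [hE]; ring
      have h0 : 0 ≤ ρ ^ 2 * cv + ζ * E := by positivity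
      nlinarith
    have hm2 : m ^ 2 ≤ ρ ^ 2 + ζ ^ 2 :=
      le_of_mul_le_mul_left (a := (ρ ^ 2 * m) * (ρ ^ 2 * m)) (by nlinarith [hCS]) (by positivity)
    have hgs : g ^ 2 * ρ ^ 2 ≤ s ^ 2 * ζ ^ 2 := by
      have h := mul_le_mul hcase.le hcase.le (mul_nonneg hg0 hρ.le)
        (le_trans (mul_nonneg hg0 hρ.le) hcase.le)
      nlinarith [h]
    have hζ2 : ζ ^ 2 ≤ t ^ 2 * μ ^ 2 := by nlinarith
    have htt : t ^ 2 ≤ 1 := by nlinarith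
    have h6 : s ^ 2 * (t ^ 2 * μ ^ 2) ≤ s ^ 2 * μ ^ 2 := by
      have : t ^ 2 * μ ^ 2 ≤ μ ^ 2 := by nlinarith [sq_nonneg μ]
      exact mul_le_mul_of_nonneg_left this (sq_nonneg s)
    have h5 : g ^ 2 * ρ ^ 2 ≤ s ^ 2 * μ ^ 2 := by
      have : s ^ 2 * ζ ^ 2 ≤ s ^ 2 * (t ^ 2 * μ ^ 2) := by nlinarith [sq_nonneg s]
      linarith
    have hid : (s ^ 2 + g ^ 2 * t ^ 2) * (ρ ^ 2 + μ ^ 2)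
        = ρ ^ 2 + t ^ 2 * μ ^ 2 + (1 - t ^ 2) * (s ^ 2 * μ ^ 2 - g ^ 2 * ρ ^ 2) := by
      rw [show (s ^ 2 + g ^ 2 * t ^ 2) * (ρ ^ 2 + μ ^ 2)
          = s ^ 2 * (ρ^2+μ^2) + g ^ 2 * (t^2 * (ρ^2+μ^2)) by ring, hg]
      ring
    have hnn : 0 ≤ (1 - t ^ 2) * (s ^ 2 * μ ^ 2 - g ^ 2 * ρ ^ 2) :=
      mul_nonneg (by nlinarith) (by linarith)
    linarith

open ContinuousLinearMap
open scoped InnerProductSpace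

section helpers
variable {E : Type*} [NormedAddCommGroup E] [InnerProductSpace ℂ E] [CompleteSpace E]

lemma sa_move (T : E →L[ℂ] E) (hT : IsSelfAdjoint T) (x y : E) :
    ⟪T x, y⟫_ℂ = ⟪x, T y⟫_ℂ := by
  conv_lhs => rw [← hT.adjoint_eq]
  exact ContinuousLinearMap.adjoint_inner_left T y x

lemma proj_apply_norm_le (T : E →L[ℂ] E) (hsa : IsSelfAdjoint T) (hid : T * T = T) (x : E) :
    ‖T x‖ ≤ ‖x‖ := by
  have hTT : T (T x) = T x := by
    conv_rhs => rw [← hid]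
    rfl
  have h1 : (⟪T x, T x⟫_ℂ) = ⟪x, T x⟫_ℂ := by rw [sa_move T hsa x (T x), hTT]
  have h2 : ‖T x‖ ^ 2 = Complex.re ⟪x, T x⟫_ℂ := by
    rw [← h1, ← inner_self_eq_norm_sq (𝕜 := ℂ)]; rfl
  have h3 : Complex.re ⟪x, T x⟫_ℂ ≤ ‖x‖ * ‖T x‖ := by
    calc Complex.re ⟪x, T x⟫_ℂ ≤ ‖(⟪x, T x⟫_ℂ)‖ := Complex.re_le_norm _
      _ ≤ ‖x‖ * ‖T x‖ := norm_inner_le_norm _ _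
  nlinarith [norm_nonneg (T x), norm_nonneg x]

lemma pyth (a b : E) (h : ⟪a, b⟫_ℂ = 0) : ‖a + b‖ ^ 2 = ‖a‖ ^ 2 + ‖b‖ ^ 2 := by
  rw [norm_add_sq (𝕜 := ℂ), h]
  simp

end helpers

section step
variable {E : Type*} [NormedAddCommGroup E] [InnerProductSpace ℂ E] [CompleteSpace E]

set_option maxHeartbeats 2000000 in
lemma step_bound (P K K' A : E →L[ℂ] E)
    (hPsa : IsSelfAdjoint P) (hPid : P * P = P)
    (hKsa : IsSelfAdjoint K) (hKid : K * K = K)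
    (hK'sa : IsSelfAdjoint K') (hK'id : K' * K' = K')
    (hPK' : P * K' = K') (hK'P : K' * P = K')
    (hKK' : K * K' = K') (hK'K : K' * K = K')
    (hAK : A * K = K) (hKA : K * A = K)
    (G s : ℝ) (hG0 : 0 ≤ G) (hG1 : G ≤ 1) (hs0 : 0 ≤ s) (hs1 : s ≤ 1)
    (hsb : ∀ y, ‖(P * K - K') y‖ ≤ s * ‖y‖)
    (hIH : ∀ y, ‖A y‖ ^ 2 ≤ (1 - G) * ‖y‖ ^ 2 + G * ‖K y‖ ^ 2)
    (x : E) :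
    ‖(P * A) x‖ ^ 2 ≤ (1 - (1 - s ^ 2) * G) * ‖x‖ ^ 2 + ((1 - s ^ 2) * G) * ‖K' x‖ ^ 2 := by
  have hAK' : A * K' = K' := by
    calc A * K' = A * (K * K') := by rw [hKK']
      _ = (A * K) * K' := (mul_assoc _ _ _).symm
      _ = K * K' := by rw [hAK]
      _ = K' := hKK'
  have hK'A : K' * A = K' := by
    calc K' * A = (K' * K) * A := by rw [hK'K]
      _ = K' * (K * A) := mul_assoc _ _ _
      _ = K' * K := by rw [hKA]
      _ = K' := hK'K
  -- point versions
  have apP : ∀ (S T : E →L[ℂ] E), S * T = T → ∀ y, S (T y) = T y := by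
    intro S T h y
    have := DFunLike.congr_fun h y
    simpa [ContinuousLinearMap.mul_apply] using this
  set c := K' x with hcdef
  set r := K x - K' x with hrdef
  set u := x - K x with hudef
  set z := A u with hzdef
  set v := P (r + z) with hvdef
  have hK'c : K' c = c := apP K' K' hK'id x
  have hKc : K c = c := apP K K' hKK' x
  have hPc : P c = c := apP P K' hPK' x
  have hAc : A c = c := apP A K' hAK' x
  have hKr : K r = r := by
    rw [hrdef, map_sub, apP K K hKid x, apP K K' hKK' x]
  have hK'r : K' r = 0 := by
    rw [hrdef, map_sub, hK'c]
    have : K' (K x) = K' x := by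
      have := DFunLike.congr_fun hK'K x
      simpa [ContinuousLinearMap.mul_apply] using this
    rw [this]
    simp [hcdef]
  have hAr : A r = r := by
    rw [hrdef, map_sub]
    have h1 : A (K x) = K x := by
      have := DFunLike.congr_fun hAK x
      simpa [ContinuousLinearMap.mul_apply] using this
    rw [h1, apP A K' hAK' x]
  have hKu : K u = 0 := by
    rw [hudef, map_sub, apP K K hKid x]
    simp
  have hK'u : K' u = 0 := by
    rw [hudef, map_sub]
    have : K' (K x) = K' x := by
      have := DFunLike.congr_fun hK'K x
      simpa [ContinuousLinearMap.mul_apply] using this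
    rw [this]
    simp [hcdef]
  have hKz : K z = 0 := by
    rw [hzdef]
    have := DFunLike.congr_fun hKA u
    simp only [ContinuousLinearMap.mul_apply] at this
    rw [this, hKu]
  have hK'z : K' z = 0 := by
    rw [hzdef]
    have := DFunLike.congr_fun hK'A u
    simp only [ContinuousLinearMap.mul_apply] at this
    rw [this, hK'u]
  have hK'v : K' v = 0 := by
    rw [hvdef]
    have := DFunLike.congr_fun hK'P (r + z)
    simp only [ContinuousLinearMap.mul_apply] at this
    rw [this, map_add, hK'r, hK'z, add_zero]
  have hPv : P v = v := by
    rw [hvdef]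
    have := DFunLike.congr_fun hPid (r + z)
    simpa [ContinuousLinearMap.mul_apply] using this
  have hxdec : c + (r + u) = x := by rw [hcdef, hrdef, hudef]; abel
  -- orthogonality
  have hcr : ⟪c, r⟫_ℂ = 0 := by
    calc ⟪c, r⟫_ℂ = ⟪K' c, r⟫_ℂ := by rw [hK'c]
      _ = ⟪c, K' r⟫_ℂ := sa_move K' hK'sa c r
      _ = 0 := by rw [hK'r, inner_zero_right]
  have hcu : ⟪c, u⟫_ℂ = 0 := by
    calc ⟪c, u⟫_ℂ = ⟪K' c, u⟫_ℂ := by rw [hK'c]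
      _ = ⟪c, K' u⟫_ℂ := sa_move K' hK'sa c u
      _ = 0 := by rw [hK'u, inner_zero_right]
  have hru : ⟪r, u⟫_ℂ = 0 := by
    calc ⟪r, u⟫_ℂ = ⟪K r, u⟫_ℂ := by rw [hKr]
      _ = ⟪r, K u⟫_ℂ := sa_move K hKsa r u
      _ = 0 := by rw [hKu, inner_zero_right]
  have hrz : ⟪r, z⟫_ℂ = 0 := by
    calc ⟪r, z⟫_ℂ = ⟪K r, z⟫_ℂ := by rw [hKr]
      _ = ⟪r, K z⟫_ℂ := sa_move K hKsa r z
      _ = 0 := by rw [hKz, inner_zero_right]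
  have hcv : ⟪c, v⟫_ℂ = 0 := by
    calc ⟪c, v⟫_ℂ = ⟪K' c, v⟫_ℂ := by rw [hK'c]
      _ = ⟪c, K' v⟫_ℂ := sa_move K' hK'sa c v
      _ = 0 := by rw [hK'v, inner_zero_right]
  -- abbreviations
  set ρ := ‖r‖ with hρdef
  set μ := ‖u‖ with hμdef
  set ζ := ‖z‖ with hζdef
  set m := ‖v‖ with hmdef
  set cv := ‖⟪v, r⟫_ℂ‖ with hcvdef
  have hx2 : ‖x‖ ^ 2 = ‖c‖ ^ 2 + (ρ ^ 2 + μ ^ 2) := by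
    rw [← hxdec, pyth c (r + u) (by rw [inner_add_right, hcr, hcu, add_zero]),
      pyth r u hru]
  have hAx : A x = c + (r + z) := by
    conv_lhs => rw [← hxdec]
    rw [map_add, map_add, hAc, hAr]
  have hPAx : (P * A) x = c + v := by
    have : (P * A) x = P (A x) := rfl
    rw [this, hAx, map_add, hPc, hvdef]
  have hLHS : ‖(P * A) x‖ ^ 2 = ‖c‖ ^ 2 + m ^ 2 := by
    rw [hPAx, pyth c v hcv]
  -- the inner product identity for m²
  have hm2 : m ^ 2 = Complex.re ⟪v, r⟫_ℂ + Complex.re ⟪v, z⟫_ℂ := by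
    have hvrz : ⟪v, r + z⟫_ℂ = ⟪v, v⟫_ℂ := by
      calc ⟪v, r + z⟫_ℂ = ⟪P v, r + z⟫_ℂ := by rw [hPv]
        _ = ⟪v, P (r + z)⟫_ℂ := sa_move P hPsa v (r + z)
        _ = ⟪v, v⟫_ℂ := by rw [← hvdef]
    have h1 : (‖v‖ : ℝ) ^ 2 = Complex.re ⟪v, v⟫_ℂ := by
      rw [← inner_self_eq_norm_sq (𝕜 := ℂ)]; rfl
    rw [hmdef, h1, ← hvrz, inner_add_right]
    simp
  have hvr_bound : cv ≤ s * (ρ * m) := by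
    have hPKr : (P * K - K') r = P r := by
      have : (P * K - K') r = P (K r) - K' r := rfl
      rw [this, hKr, hK'r, sub_zero]
    have hinner : ⟪v, r⟫_ℂ = ⟪v, (P * K - K') r⟫_ℂ := by
      calc ⟪v, r⟫_ℂ = ⟪P v, r⟫_ℂ := by rw [hPv]
        _ = ⟪v, P r⟫_ℂ := sa_move P hPsa v r
        _ = ⟪v, (P * K - K') r⟫_ℂ := by rw [hPKr]
    calc cv = ‖⟪v, (P * K - K') r⟫_ℂ‖ := by rw [hcvdef, hinner]
      _ ≤ m * ‖(P * K - K') r‖ := norm_inner_le_norm _ _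
      _ ≤ m * (s * ρ) := mul_le_mul_of_nonneg_left (hsb r) (norm_nonneg v)
      _ = s * (ρ * m) := by ring
  have hζG : ζ ^ 2 ≤ (1 - G) * μ ^ 2 := by
    have := hIH u
    rw [hKu] at this
    simpa using this
  -- reduce to the key bound
  have hc2 : ‖K' x‖ = ‖c‖ := rfl
  rw [hc2, hLHS, hx2]
  have hfin : m ^ 2 ≤ (1 - (1 - s ^ 2) * G) * (ρ ^ 2 + μ ^ 2) → ‖c‖ ^ 2 + m ^ 2 ≤
      (1 - (1 - s ^ 2) * G) * (‖c‖ ^ 2 + (ρ ^ 2 + μ ^ 2)) + (1 - s ^ 2) * G * ‖c‖ ^ 2 := by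
    intro h
    nlinarith [sq_nonneg ‖c‖]
  apply hfin
  have hsG1 : (1 - s ^ 2) * G ≤ 1 := by nlinarith
  have hsG0 : 0 ≤ (1 - s ^ 2) * G := mul_nonneg (by nlinarith) hG0
  by_cases hm0 : m = 0
  · rw [hm0]
    have : (0:ℝ) ≤ ρ ^ 2 + μ ^ 2 := by positivity
    nlinarith
  by_cases hρ0 : ρ = 0
  · have hr0 : r = 0 := norm_eq_zero.mp hρ0
    have hmζ : m ≤ ζ := by
      rw [hmdef, hvdef, hr0, zero_add]
      exact proj_apply_norm_le P hPsa hPid z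
    have h1 : m ^ 2 ≤ (1 - G) * μ ^ 2 := by nlinarith [norm_nonneg v, norm_nonneg z]
    have h2 : 0 ≤ s ^ 2 * G * μ ^ 2 := by positivity
    rw [hρ0]
    nlinarith
  -- main case
  have hρpos : 0 < ρ := lt_of_le_of_ne (norm_nonneg r) (Ne.symm hρ0)
  have hmpos : 0 < m := lt_of_le_of_ne (norm_nonneg v) (Ne.symm hm0)
  set e := ((ρ ^ 2 : ℝ) : ℂ) • v - (⟪r, v⟫_ℂ) • r with hedef
  have hez : ⟪e, z⟫_ℂ = ((ρ ^ 2 : ℝ) : ℂ) * ⟪v, z⟫_ℂ := by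
    rw [hedef, inner_sub_left, inner_smul_left, inner_smul_left, hrz]
    simp [Complex.conj_ofReal]
  have hre : ρ ^ 2 * Complex.re ⟪v, z⟫_ℂ = Complex.re ⟪e, z⟫_ℂ := by
    rw [hez, Complex.re_ofReal_mul]
  have hwconj : ⟪r, v⟫_ℂ = (starRingEnd ℂ) ⟪v, r⟫_ℂ := (inner_conj_symm r v).symm
  have hE : ‖e‖ ^ 2 = ρ ^ 2 * (ρ ^ 2 * m ^ 2 - cv ^ 2) := by
    have h1 : ‖e‖ ^ 2 = ‖((ρ ^ 2 : ℝ) : ℂ) • v‖ ^ 2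
        - 2 * Complex.re ⟪((ρ ^ 2 : ℝ) : ℂ) • v, (⟪r, v⟫_ℂ) • r⟫_ℂ
        + ‖(⟪r, v⟫_ℂ) • r‖ ^ 2 := by
      rw [hedef]
      exact norm_sub_sq (𝕜 := ℂ) _ _
    have h2 : ‖((ρ ^ 2 : ℝ) : ℂ) • v‖ ^ 2 = ρ ^ 4 * m ^ 2 := by
      rw [norm_smul, Complex.norm_real, Real.norm_eq_abs, abs_of_nonneg (sq_nonneg ρ)]
      ring
    have h3 : ‖(⟪r, v⟫_ℂ) • r‖ ^ 2 = cv ^ 2 * ρ ^ 2 := by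
      rw [norm_smul, hwconj]
      rw [RCLike.norm_conj]
      rw [← hcvdef, ← hρdef]
      ring
    have h4 : ⟪((ρ ^ 2 : ℝ) : ℂ) • v, (⟪r, v⟫_ℂ) • r⟫_ℂ
        = ((ρ ^ 2 : ℝ) : ℂ) * ((⟪r, v⟫_ℂ) * ⟪v, r⟫_ℂ) := by
      rw [inner_smul_left, inner_smul_right, Complex.conj_ofReal]
    have h5 : (⟪r, v⟫_ℂ) * ⟪v, r⟫_ℂ = ((cv ^ 2 : ℝ) : ℂ) := by
      rw [hwconj, RCLike.conj_mul, hcvdef]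
      norm_cast
    have h6 : Complex.re ⟪((ρ ^ 2 : ℝ) : ℂ) • v, (⟪r, v⟫_ℂ) • r⟫_ℂ = ρ ^ 2 * cv ^ 2 := by
      rw [h4, h5]
      norm_cast
    rw [h1, h2, h3, h6]
    ring
  have hmE : ρ ^ 2 * m ^ 2 ≤ ρ ^ 2 * cv + ζ * ‖e‖ := by
    have h1 : Complex.re ⟪v, r⟫_ℂ ≤ cv := by
      rw [hcvdef]
      exact le_trans (le_abs_self _) (Complex.abs_re_le_norm _)
    have h2 : Complex.re ⟪e, z⟫_ℂ ≤ ‖e‖ * ζ := by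
      calc Complex.re ⟪e, z⟫_ℂ ≤ ‖⟪e, z⟫_ℂ‖ :=
            le_trans (le_abs_self _) (Complex.abs_re_le_norm _)
        _ ≤ ‖e‖ * ‖z‖ := norm_inner_le_norm _ _
    have h3 : ρ ^ 2 * Complex.re ⟪v, r⟫_ℂ ≤ ρ ^ 2 * cv :=
      mul_le_mul_of_nonneg_left h1 (sq_nonneg ρ)
    have h4 : ρ ^ 2 * m ^ 2 = ρ ^ 2 * Complex.re ⟪v, r⟫_ℂ + ρ ^ 2 * Complex.re ⟪v, z⟫_ℂ := by
      rw [hm2]; ring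
    rw [h4]
    have h5 : ρ ^ 2 * Complex.re ⟪v, z⟫_ℂ ≤ ζ * ‖e‖ := by
      rw [hre]; linarith
    linarith
  -- apply the scalar lemma
  set t := Real.sqrt (1 - G) with htdef
  set g := Real.sqrt (1 - s ^ 2) with hgdef
  have ht2 : t ^ 2 = 1 - G := Real.sq_sqrt (by linarith)
  have hg2 : g ^ 2 = 1 - s ^ 2 := Real.sq_sqrt (by nlinarith)
  have hζt : ζ ≤ t * μ := by
    have h1 : ζ ^ 2 ≤ (t * μ) ^ 2 := by
      rw [mul_pow, ht2]; exact hζG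
    have h2 : 0 ≤ t * μ := mul_nonneg (Real.sqrt_nonneg _) (norm_nonneg u)
    nlinarith [norm_nonneg z]
  have hresult := scalar_key s t g ρ μ ζ cv ‖e‖ m hs0 (Real.sqrt_nonneg _)
    (Real.sqrt_le_one.mpr (by linarith)) (Real.sqrt_nonneg _) hg2 hρpos (norm_nonneg u)
    (norm_nonneg z) hζt (norm_nonneg _) hvr_bound hmpos (norm_nonneg e) hE hmE
  rw [ht2] at hresult
  convert hresult using 2
  ring
end step



open Matrix

set_option maxHeartbeats 4000000 in
/-- Lemma S5; Theorem 7 of Belkin et al..  For cluster projectors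
`Pr j` (layers `j = 1, …, l`) and combined-cluster projectors `C j` satisfying the
compatibility relations, the gap `Δ := 1 - ‖Pr l ⋯ Pr 1 - C l‖` satisfies
`(1 - Δ)² ≤ 1 - ∏_{j=2}^{l} γ_j` with `γ_j := 1 - ‖Pr j * C (j-1) - C j‖²`. -/
theorem haar_block_gap_decomposition
    (n l : ℕ) (hn : 1 ≤ n) (hl : 1 ≤ l)
    (Pr C : ℕ → Matrix (Fin n) (Fin n) ℂ)
    (hPr_herm : ∀ j, 1 ≤ j → j ≤ l → (Pr j)ᴴ = Pr j)
    (hPr_idem : ∀ j, 1 ≤ j → j ≤ l → Pr j * Pr j = Pr j)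
    (hC_herm : ∀ j, 1 ≤ j → j ≤ l → (C j)ᴴ = C j)
    (hC_idem : ∀ j, 1 ≤ j → j ≤ l → C j * C j = C j)
    (hC1 : C 1 = Pr 1)
    (hPrC : ∀ j, 2 ≤ j → j ≤ l → Pr j * C j = C j ∧ C j * Pr j = C j)
    (hCC : ∀ j, 2 ≤ j → j ≤ l → C (j - 1) * C j = C j ∧ C j * C (j - 1) = C j)
    (hPrCl : ∀ j, 1 ≤ j → j ≤ l → Pr j * C l = C l ∧ C l * Pr j = C l) :
    (1 - (1 - opNorm ((List.ofFn fun j : Fin l => Pr (j.val + 1)).reverse.prod - C l))) ^ 2 ≤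
      1 - ∏ j ∈ Finset.Icc 2 l, (1 - opNorm (Pr j * C (j - 1) - C j) ^ 2) := by
  classical
  set φ := Matrix.toEuclideanCLM (𝕜 := ℂ) (n := Fin n) with hφdef
  set Amat : ℕ → Matrix (Fin n) (Fin n) ℂ :=
    fun j => (List.ofFn fun i : Fin j => Pr (i.val + 1)).reverse.prod with hAmatdef
  have hAmat0 : Amat 0 = 1 := by simp [hAmatdef]
  have hAmat_succ : ∀ j, Amat (j + 1) = Pr (j + 1) * Amat j := by
    intro j
    show (List.ofFn fun i : Fin (j+1) => Pr (i.val + 1)).reverse.prod = _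
    rw [List.ofFn_succ']
    rw [show ((List.ofFn fun i : Fin j => Pr ((Fin.castSucc i).val + 1)).concat
        (Pr ((Fin.last j).val + 1))).reverse
        = Pr (j + 1) :: (List.ofFn fun i : Fin j => Pr (i.val + 1)).reverse from ?_]
    · rw [List.prod_cons]
    · simp [List.concat_eq_append]
  -- basic projector facts, combining hC1 / hPrC
  have hPrCk : ∀ k, 1 ≤ k → k ≤ l → Pr k * C k = C k ∧ C k * Pr k = C k := by
    intro k hk1 hkl
    rcases eq_or_lt_of_le hk1 with h | h
    · rw [← h, hC1]
      exact ⟨hPr_idem 1 le_rfl hl, hPr_idem 1 le_rfl hl⟩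
    · exact hPrC k h hkl
  have hchainC : ∀ k m, 1 ≤ k → k ≤ m → m ≤ l → C k * C m = C m ∧ C m * C k = C m := by
    intro k m hk hkm
    induction m, hkm using Nat.le_induction with
    | base => intro hkl; exact ⟨hC_idem k hk hkl, hC_idem k hk hkl⟩
    | succ m hkm ih =>
      intro hml
      have ih' := ih (by omega)
      have hcc := hCC (m + 1) (by omega) hml
      rw [show m + 1 - 1 = m from rfl] at hcc
      constructor
      · calc C k * C (m + 1) = C k * (C m * C (m + 1)) := by rw [hcc.1]
          _ = (C k * C m) * C (m + 1) := (mul_assoc _ _ _).symm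
          _ = C m * C (m + 1) := by rw [ih'.1]
          _ = C (m + 1) := hcc.1
      · calc C (m + 1) * C k = (C (m + 1) * C m) * C k := by rw [hcc.2]
          _ = C (m + 1) * (C m * C k) := mul_assoc _ _ _
          _ = C (m + 1) * C m := by rw [ih'.2]
          _ = C (m + 1) := hcc.2
  have hPrCm : ∀ k m, 1 ≤ k → k ≤ m → m ≤ l → Pr k * C m = C m ∧ C m * Pr k = C m := by
    intro k m hk hkm hml
    obtain ⟨h1, h2⟩ := hchainC k m hk hkm hml
    obtain ⟨p1, p2⟩ := hPrCk k hk (le_trans hkm hml)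
    constructor
    · calc Pr k * C m = Pr k * (C k * C m) := by rw [h1]
        _ = (Pr k * C k) * C m := (mul_assoc _ _ _).symm
        _ = C k * C m := by rw [p1]
        _ = C m := h1
    · calc C m * Pr k = (C m * C k) * Pr k := by rw [h2]
        _ = C m * (C k * Pr k) := mul_assoc _ _ _
        _ = C m * C k := by rw [p2]
        _ = C m := h2
  have hAmatC : ∀ j m, j ≤ m → 1 ≤ m → m ≤ l → Amat j * C m = C m ∧ C m * Amat j = C m := by
    intro j
    induction j with
    | zero => intro m _ _ _; rw [hAmat0, one_mul, mul_one]; exact ⟨rfl, rfl⟩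
    | succ j ih =>
      intro m hjm hm1 hml
      have ihm := ih m (by omega) hm1 hml
      have hp := hPrCm (j + 1) m (by omega) hjm hml
      rw [hAmat_succ j]
      constructor
      · rw [mul_assoc, ihm.1, hp.1]
      · rw [← mul_assoc, hp.2, ihm.2]
  -- transfer to continuous linear maps
  have hsa : ∀ (M : Matrix (Fin n) (Fin n) ℂ), Mᴴ = M → IsSelfAdjoint (φ M) := by
    intro M hM
    show star (φ M) = φ M
    rw [← StarHomClass.map_star φ M, Matrix.star_eq_conjTranspose, hM]
  have hproj_norm : ∀ (M : Matrix (Fin n) (Fin n) ℂ), Mᴴ = M → M * M = M → ‖φ M‖ ≤ 1 := by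
    intro M h1 h2
    apply ContinuousLinearMap.opNorm_le_bound _ zero_le_one
    intro x
    rw [one_mul]
    exact proj_apply_norm_le (φ M) (hsa M h1) (by rw [← _root_.map_mul, h2]) x
  -- the γ's
  have hsbound : ∀ k, 2 ≤ k → k ≤ l → opNorm (Pr k * C (k - 1) - C k) ≤ 1 := by
    intro k hk2 hkl
    have hk1 : 1 ≤ k - 1 := by omega
    have hk1l : k - 1 ≤ l := by omega
    have hmid : Pr k * C (k - 1) - C k = (Pr k - C k) * C (k - 1) := by
      rw [sub_mul, (hCC k hk2 hkl).2]
    have hQherm : (Pr k - C k)ᴴ = Pr k - C k := by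
      rw [Matrix.conjTranspose_sub, hPr_herm k (by omega) hkl, hC_herm k (by omega) hkl]
    have hQidem : (Pr k - C k) * (Pr k - C k) = Pr k - C k := by
      rw [sub_mul, mul_sub, mul_sub, hPr_idem k (by omega) hkl,
        (hPrCk k (by omega) hkl).1, (hPrCk k (by omega) hkl).2, hC_idem k (by omega) hkl]
      abel
    have h1 : ‖φ (Pr k - C k)‖ ≤ 1 := hproj_norm _ hQherm hQidem
    have h2 : ‖φ (C (k - 1))‖ ≤ 1 :=
      hproj_norm _ (hC_herm (k - 1) hk1 hk1l) (hC_idem (k - 1) hk1 hk1l)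
    have h3 : opNorm (Pr k * C (k - 1) - C k) = ‖φ (Pr k - C k) * φ (C (k - 1))‖ := by
      rw [← _root_.map_mul, ← hmid]; rfl
    rw [h3]
    calc ‖φ (Pr k - C k) * φ (C (k - 1))‖ ≤ ‖φ (Pr k - C k)‖ * ‖φ (C (k - 1))‖ :=
          norm_mul_le _ _
      _ ≤ 1 := by nlinarith [norm_nonneg (φ (Pr k - C k)), norm_nonneg (φ (C (k - 1)))]
  set Gp : ℕ → ℝ :=
    fun j => ∏ k ∈ Finset.Icc 2 j, (1 - opNorm (Pr k * C (k - 1) - C k) ^ 2) with hGpdef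
  have hγ01 : ∀ k, 2 ≤ k → k ≤ l → 0 ≤ 1 - opNorm (Pr k * C (k - 1) - C k) ^ 2 ∧
      1 - opNorm (Pr k * C (k - 1) - C k) ^ 2 ≤ 1 := by
    intro k hk2 hkl
    have h1 := hsbound k hk2 hkl
    have h0 : 0 ≤ opNorm (Pr k * C (k - 1) - C k) := norm_nonneg _
    constructor <;> nlinarith
  have hGp0 : ∀ j, j ≤ l → 0 ≤ Gp j := by
    intro j hjl
    apply Finset.prod_nonneg
    intro k hk
    rw [Finset.mem_Icc] at hk
    exact (hγ01 k hk.1 (le_trans hk.2 hjl)).1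
  have hGp1 : ∀ j, j ≤ l → Gp j ≤ 1 := by
    intro j hjl
    apply Finset.prod_le_one
    · intro k hk
      rw [Finset.mem_Icc] at hk
      exact (hγ01 k hk.1 (le_trans hk.2 hjl)).1
    · intro k hk
      rw [Finset.mem_Icc] at hk
      exact (hγ01 k hk.1 (le_trans hk.2 hjl)).2
  -- main induction
  have main : ∀ j, 1 ≤ j → j ≤ l → ∀ x : EuclideanSpace ℂ (Fin n),
      ‖φ (Amat j) x‖ ^ 2 ≤ (1 - Gp j) * ‖x‖ ^ 2 + Gp j * ‖φ (C j) x‖ ^ 2 := by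
    intro j hj1
    induction j, hj1 using Nat.le_induction with
    | base =>
      intro h1l x
      have hA1 : Amat 1 = C 1 := by rw [hAmat_succ 0, hAmat0, mul_one, hC1]
      have hG1 : Gp 1 = 1 := by
        rw [hGpdef]
        simp [Finset.Icc_eq_empty (show ¬(2:ℕ) ≤ 1 by omega)]
      rw [hA1, hG1]
      ring_nf
      simp
    | succ j hj1 ih =>
      intro hjl x
      have hjl' : j ≤ l := by omega
      have hj2 : 2 ≤ j + 1 := by omega
      have hcc1 := hCC (j + 1) (by omega : 2 ≤ j + 1) hjl
      rw [show j + 1 - 1 = j from rfl] at hcc1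
      set s := opNorm (Pr (j + 1) * C (j + 1 - 1) - C (j + 1)) with hsdef
      have hs0 : 0 ≤ s := norm_nonneg _
      have hs1 : s ≤ 1 := hsbound (j + 1) hj2 hjl
      have hGsucc : Gp (j + 1) = Gp j * (1 - s ^ 2) := by
        rw [hGpdef]
        exact Finset.prod_Icc_succ_top hj2 _
      have hstep := step_bound (φ (Pr (j + 1))) (φ (C j)) (φ (C (j + 1))) (φ (Amat j))
        (hsa _ (hPr_herm (j + 1) (by omega) hjl))
        (by rw [← _root_.map_mul, hPr_idem (j + 1) (by omega) hjl])
        (hsa _ (hC_herm j (by omega) hjl'))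
        (by rw [← _root_.map_mul, hC_idem j (by omega) hjl'])
        (hsa _ (hC_herm (j + 1) (by omega) hjl))
        (by rw [← _root_.map_mul, hC_idem (j + 1) (by omega) hjl])
        (by rw [← _root_.map_mul, (hPrC (j + 1) hj2 hjl).1])
        (by rw [← _root_.map_mul, (hPrC (j + 1) hj2 hjl).2])
        (by rw [← _root_.map_mul, hcc1.1])
        (by rw [← _root_.map_mul, hcc1.2])
        (by rw [← _root_.map_mul, (hAmatC j j le_rfl (by omega) hjl').1])
        (by rw [← _root_.map_mul, (hAmatC j j le_rfl (by omega) hjl').2])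
        (Gp j) s (hGp0 j hjl') (hGp1 j hjl') hs0 hs1
        (by
          intro y
          have hφeq : φ (Pr (j + 1)) * φ (C j) - φ (C (j + 1))
              = φ (Pr (j + 1) * C (j + 1 - 1) - C (j + 1)) := by
            rw [_root_.map_sub, _root_.map_mul]
            rfl
          rw [hφeq]
          exact ContinuousLinearMap.le_opNorm _ y)
        (ih hjl') x
      have hAφ : φ (Amat (j + 1)) = φ (Pr (j + 1)) * φ (Amat j) := by
        rw [hAmat_succ j, _root_.map_mul]
      rw [hAφ, hGsucc]
      have heq : (1 - Gp j * (1 - s ^ 2)) * ‖x‖ ^ 2 + Gp j * (1 - s ^ 2) * ‖φ (C (j + 1)) x‖ ^ 2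
          = (1 - (1 - s ^ 2) * Gp j) * ‖x‖ ^ 2
            + ((1 - s ^ 2) * Gp j) * ‖φ (C (j + 1)) x‖ ^ 2 := by ring
      rw [heq]
      exact hstep
  -- final assembly
  have hGl0 := hGp0 l le_rfl
  have hGl1 := hGp1 l le_rfl
  set T := φ (Amat l - C l) with hTdef
  have hTsub : T = φ (Amat l) - φ (C l) := by rw [hTdef, _root_.map_sub]
  have hpoint : ∀ x : EuclideanSpace ℂ (Fin n), ‖T x‖ ^ 2 ≤ (1 - Gp l) * ‖x‖ ^ 2 := by
    intro x
    set y := x - φ (C l) x with hydef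
    have hCsa : IsSelfAdjoint (φ (C l)) := hsa _ (hC_herm l hl le_rfl)
    have hCCapp : φ (C l) (φ (C l) x) = φ (C l) x := by
      have := DFunLike.congr_fun (show φ (C l) * φ (C l) = φ (C l) by
        rw [← _root_.map_mul, hC_idem l hl le_rfl]) x
      simpa [ContinuousLinearMap.mul_apply] using this
    have hCy : φ (C l) y = 0 := by
      rw [hydef, _root_.map_sub, hCCapp, sub_self]
    have hAy : φ (Amat l) y = T x := by
      rw [hydef, _root_.map_sub, hTsub]
      have hAC : φ (Amat l) (φ (C l) x) = φ (C l) x := by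
        have := DFunLike.congr_fun (show φ (Amat l) * φ (C l) = φ (C l) by
          rw [← _root_.map_mul, (hAmatC l l le_rfl hl le_rfl).1]) x
        simpa [ContinuousLinearMap.mul_apply] using this
      rw [hAC]
      rfl
    have hyx : ‖y‖ ^ 2 ≤ ‖x‖ ^ 2 := by
      have hinner : ⟪φ (C l) x, y⟫_ℂ = 0 := by
        calc ⟪φ (C l) x, y⟫_ℂ = ⟪x, φ (C l) y⟫_ℂ := sa_move (φ (C l)) hCsa x y
          _ = 0 := by rw [hCy, inner_zero_right]
      have hxdec : φ (C l) x + y = x := by rw [hydef]; abel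
      have := pyth (φ (C l) x) y hinner
      rw [hxdec] at this
      nlinarith [sq_nonneg ‖φ (C l) x‖]
    have hmain := main l hl le_rfl y
    rw [hCy] at hmain
    simp only [norm_zero] at hmain
    have h1 : ‖φ (Amat l) y‖ ^ 2 ≤ (1 - Gp l) * ‖y‖ ^ 2 := by
      nlinarith [hmain]
    rw [hAy] at h1
    nlinarith [h1, mul_le_mul_of_nonneg_left hyx (show (0:ℝ) ≤ 1 - Gp l by linarith)]
  have hTnorm : ‖T‖ ≤ Real.sqrt (1 - Gp l) := by
    apply ContinuousLinearMap.opNorm_le_bound _ (Real.sqrt_nonneg _)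
    intro x
    have h1 := hpoint x
    have h2 : ‖T x‖ = Real.sqrt (‖T x‖ ^ 2) := (Real.sqrt_sq (norm_nonneg _)).symm
    rw [h2]
    calc Real.sqrt (‖T x‖ ^ 2) ≤ Real.sqrt ((1 - Gp l) * ‖x‖ ^ 2) := Real.sqrt_le_sqrt h1
      _ = Real.sqrt (1 - Gp l) * ‖x‖ := by
          rw [Real.sqrt_mul (by linarith) (‖x‖ ^ 2), Real.sqrt_sq (norm_nonneg _)]
  have hgoal_lhs : (1 - (1 - opNorm ((List.ofFn fun j : Fin l => Pr (j.val + 1)).reverse.prod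
      - C l))) = ‖T‖ := by
    rw [sub_sub_cancel]
    rfl
  rw [hgoal_lhs]
  have h2 : ‖T‖ ^ 2 ≤ 1 - Gp l := by
    have := pow_le_pow_left₀ (norm_nonneg T) hTnorm 2
    rwa [Real.sq_sqrt (by linarith)] at this
  exact h2
end

section
/- For all natural numbers k, l and all real numbers x, y ∈ [0,1], the inequality (1 − (1−x)^l·(1−y)^k)² ≥ 1 − (1−x²)^l·(1−y²)^k holds. -/
lemma aux_pow (n : ℕ) (x : ℝ) (hx0 : 0 ≤ x) (hx1 : x ≤ 1) :
    0 ≤ (1 - x) ^ n ∧ (1 - x) ^ n ≤ (1 + x) ^ n ∧ 2 ≤ (1 - x) ^ n + (1 + x) ^ n := by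
  induction n with
  | zero => norm_num
  | succ n ih =>
    obtain ⟨h1, h2, h3⟩ := ih
    rw [pow_succ, pow_succ]
    refine ⟨mul_nonneg h1 (by linarith), ?_, ?_⟩
    · nlinarith
    · nlinarith

/-- Lemma S9.  For natural numbers `k, l` and `x, y ∈ [0,1]`,
`(1 - (1-x)^l (1-y)^k)² ≥ 1 - (1-x²)^l (1-y²)^k`. -/
theorem one_sub_pow_mul_sq_ge
    (k l : ℕ) (x y : ℝ) (hx0 : 0 ≤ x) (hx1 : x ≤ 1) (hy0 : 0 ≤ y) (hy1 : y ≤ 1) :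
    (1 - (1 - x) ^ l * (1 - y) ^ k) ^ 2 ≥ 1 - (1 - x ^ 2) ^ l * (1 - y ^ 2) ^ k := by
  obtain ⟨hx1', hx2, hx3⟩ := aux_pow l x hx0 hx1
  obtain ⟨hy1', hy2, hy3⟩ := aux_pow k y hy0 hy1
  have ex : (1 - x ^ 2) ^ l = (1 - x) ^ l * (1 + x) ^ l := by
    rw [← mul_pow]; ring_nf
  have ey : (1 - y ^ 2) ^ k = (1 - y) ^ k * (1 + y) ^ k := by
    rw [← mul_pow]; ring_nf
  rw [ex, ey]
  have ha : 0 ≤ (1 - x) ^ l * (1 - y) ^ k := mul_nonneg hx1' hy1'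
  have hsum : 2 ≤ (1 - x) ^ l * (1 - y) ^ k + (1 + x) ^ l * (1 + y) ^ k := by
    nlinarith [mul_nonneg (sub_nonneg.2 hx2) (sub_nonneg.2 hy2)]
  nlinarith [mul_nonneg ha (by linarith : (0:ℝ) ≤ (1 - x) ^ l * (1 - y) ^ k + (1 + x) ^ l * (1 + y) ^ k - 2)]
end

section
/- Let n ≥ 1, l ≥ 1, and let M_1, …, M_l, P_1, …, P_l, C_1, …, C_l be as follows: M_j are n×n complex matrices with ‖M_j‖ ≤ 1; P_j are n×n orthogonal projections with M_j P_j = P_j M_j = P_j and ‖M_j − P_j‖ ≤ 1; C_j are n×n orthogonal projections with C_1 = P_1, P_j C_j = C_j P_j = C_j and C_{j−1} C_j = C_j C_{j−1} = C_j for j ∈ {2,…,l}, and M_j C_l = C_l M_j = C_l for all j. Suppose moreover there exist x, f ∈ [0,1] such that 1 − ‖M_j − P_j‖² ≥ 1 − (1−x)² for every j ∈ {1,…,l} and 1 − ‖P_j C_{j−1} − C_j‖² ≥ 1 − (1−f)² for every j ∈ {2,…,l}. Then 1 − ‖M_l ⋯ M_2 M_1 − C_l‖ ≥ x^l · f^{l−1}.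 -/
set_option maxHeartbeats 1000000

open Matrix

section Aux
variable {E : Type*} [NormedAddCommGroup E] [InnerProductSpace ℂ E] [CompleteSpace E]

local notation "⟪" x ", " y "⟫" => @inner ℂ _ _ x y

lemma clm_mul_app (f g : E →L[ℂ] E) (x : E) : (f * g) x = f (g x) := rfl

/-- Pythagoras for a self-adjoint idempotent. -/
lemma proj_pyth {T : E →L[ℂ] E} (hT : IsSelfAdjoint T) (hTT : T * T = T) (v : E) :
    ‖T v‖ ^ 2 + ‖v - T v‖ ^ 2 = ‖v‖ ^ 2 := by
  have hTv : T (T v) = T v := by rw [← clm_mul_app, hTT]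
  have h0 : ⟪T v, v - T v⟫ = 0 := by
    have hs := hT.isSymmetric v (v - T v)
    simp only [ContinuousLinearMap.coe_coe] at hs
    rw [hs]
    simp [map_sub, hTv]
  have h := norm_add_sq_eq_norm_sq_add_norm_sq_of_inner_eq_zero (T v) (v - T v) h0
  have h2 : T v + (v - T v) = v := by abel
  rw [h2] at h
  nlinarith [h]

/-- Orthogonal Pythagoras through a self-adjoint operator fixing the first leg and
annihilating the second leg. -/
lemma orth_norm_sq {T : E →L[ℂ] E} (hT : IsSelfAdjoint T) (a b : E)
    (ha : T a = a) (hb : T b = 0) : ‖a + b‖ ^ 2 = ‖a‖ ^ 2 + ‖b‖ ^ 2 := by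
  have h0 : ⟪a, b⟫ = 0 := by
    have hs := hT.isSymmetric a b
    simp only [ContinuousLinearMap.coe_coe] at hs
    rw [← ha, hs]
    simp [hb]
  have h := norm_add_sq_eq_norm_sq_add_norm_sq_of_inner_eq_zero a b h0
  nlinarith [h]

lemma norm_le_of_sq_le_sq {p q : ℝ} (h : p ^ 2 ≤ q ^ 2) (hp : 0 ≤ p) (hq : 0 ≤ q) :
    p ≤ q :=
  (pow_le_pow_iff_left₀ hp hq two_ne_zero).mp h

/-- Core bound. -/
lemma core_bound (W D R : E →L[ℂ] E) (g e : ℝ)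
    (hW : IsSelfAdjoint W) (hWW : W * W = W)
    (hD : IsSelfAdjoint D) (hDD : D * D = D)
    (hRD : R * D = D) (hDR : D * R = D)
    (hgD : ‖D * W‖ ≤ g) (hRe : ‖R - D‖ ≤ e)
    (hg0 : 0 ≤ g) (he0 : 0 ≤ e) (he1 : e ≤ 1) (u : E) :
    ‖(R * W) u‖ ^ 2 ≤ (g ^ 2 + e ^ 2 - g ^ 2 * e ^ 2) * ‖u‖ ^ 2 := by
  set z := W u with hz
  have hfix : D (D z) = D z := by rw [← clm_mul_app, hDD]
  have hRz : (R * W) u = D z + (R - D) (z - D z) := by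
    have hRDz : R (D z) = D z := by rw [← clm_mul_app, hRD]
    simp only [clm_mul_app, ← hz, ContinuousLinearMap.sub_apply, map_sub, hRDz, hfix]
    abel
  have hkill : D ((R - D) (z - D z)) = 0 := by
    have h1 : D * (R - D) = 0 := by rw [mul_sub, hDR, hDD, sub_self]
    have h2 := congrArg (fun S : E →L[ℂ] E => S (z - D z)) h1
    simpa [clm_mul_app] using h2
  have hpy : ‖(R * W) u‖ ^ 2 = ‖D z‖ ^ 2 + ‖(R - D) (z - D z)‖ ^ 2 := by
    rw [hRz]; exact orth_norm_sq hD _ _ hfix hkill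
  have hDz : ‖D z‖ ≤ g * ‖u‖ := by
    have h2 : (D * W) u = D z := rfl
    calc ‖D z‖ = ‖(D * W) u‖ := by rw [h2]
      _ ≤ ‖D * W‖ * ‖u‖ := (D * W).le_opNorm u
      _ ≤ g * ‖u‖ := by gcongr
  have hRDe : ‖(R - D) (z - D z)‖ ≤ e * ‖z - D z‖ :=
    le_trans ((R - D).le_opNorm (z - D z)) (by gcongr)
  have hzu : ‖z‖ ≤ ‖u‖ := by
    have h1 := proj_pyth hW hWW u
    refine norm_le_of_sq_le_sq ?_ (norm_nonneg _) (norm_nonneg _)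
    nlinarith [sq_nonneg ‖u - W u‖]
  have hDpy := proj_pyth hD hDD z
  -- ‖Dz‖² + ‖z - Dz‖² = ‖z‖²
  have hb2 : ‖(R - D) (z - D z)‖ ^ 2 ≤ e ^ 2 * ‖z - D z‖ ^ 2 := by
    nlinarith [norm_nonneg ((R - D) (z - D z)), norm_nonneg (z - D z)]
  have hDz2 : ‖D z‖ ^ 2 ≤ g ^ 2 * ‖u‖ ^ 2 := by
    nlinarith [norm_nonneg (D z), norm_nonneg u]
  have he2 : e ^ 2 ≤ 1 := by nlinarith
  have hz2 : ‖z‖ ^ 2 ≤ ‖u‖ ^ 2 := by nlinarith [norm_nonneg z, norm_nonneg u]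
  have hA : e ^ 2 * (‖D z‖ ^ 2 + ‖z - D z‖ ^ 2) = e ^ 2 * ‖z‖ ^ 2 := by rw [hDpy]
  have hz2e : e ^ 2 * ‖z‖ ^ 2 ≤ e ^ 2 * ‖u‖ ^ 2 :=
    mul_le_mul_of_nonneg_left hz2 (sq_nonneg e)
  have hDg : (1 - e ^ 2) * ‖D z‖ ^ 2 ≤ (1 - e ^ 2) * (g ^ 2 * ‖u‖ ^ 2) :=
    mul_le_mul_of_nonneg_left hDz2 (by linarith)
  nlinarith [hpy, hb2, hA, hz2e, hDg]

end Aux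

section Step
variable {E : Type*} [NormedAddCommGroup E] [InnerProductSpace ℂ E] [CompleteSpace E]

/-- One-layer gap composition step. -/
lemma step_bound_s9 (M P C D Q : E →L[ℂ] E) (a g e : ℝ)
    (hP : IsSelfAdjoint P) (hC : IsSelfAdjoint C) (hD : IsSelfAdjoint D)
    (hPP : P * P = P) (hCC : C * C = C) (hDD : D * D = D)
    (hPC : P * C = C) (hCP : C * P = C) (hDC : D * C = C)
    (hMP : M * P = P) (hPM : P * M = P)
    (hQD : Q * D = D) (hDQ : D * Q = D)
    (hQC : Q * C = C) (hCQ : C * Q = C)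
    (hQ1 : ‖Q‖ ≤ 1)
    (hMPa : ‖M - P‖ ≤ a) (hgn : ‖P * D - C‖ ≤ g) (hen : ‖Q - D‖ ≤ e)
    (ha0 : 0 ≤ a) (ha1 : a ≤ 1) (hg0 : 0 ≤ g) (hg1 : g ≤ 1) (he0 : 0 ≤ e) (he1 : e ≤ 1) :
    ‖M * Q - C‖ ^ 2 ≤ 1 - (1 - a ^ 2) * (1 - g ^ 2) * (1 - e ^ 2) := by
  set W : E →L[ℂ] E := P - C with hWdef
  have hW : IsSelfAdjoint W := hP.sub hC
  have hWW : W * W = W := by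
    simp only [hWdef, mul_sub, sub_mul, hPP, hCC, hPC, hCP]
    abel
  -- the "adjoint" of Q satisfies the mirrored relations
  set R : E →L[ℂ] E := star Q with hRdef
  have hRD : R * D = D := by
    have := congrArg star hDQ
    simpa [StarMul.star_mul, hD.star_eq] using this
  have hDR : D * R = D := by
    have := congrArg star hQD
    simpa [StarMul.star_mul, hD.star_eq] using this
  have hgD : ‖D * W‖ ≤ g := by
    have hDW : D * W = star (P * D - C) := by
      simp only [hWdef, star_sub, StarMul.star_mul, hP.star_eq, hC.star_eq, hD.star_eq, mul_sub, hDC]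
    rw [hDW, norm_star]
    exact hgn
  have hRe : ‖R - D‖ ≤ e := by
    have : R - D = star (Q - D) := by simp [hRdef, star_sub, hD.star_eq]
    rw [this, norm_star]
    exact hen
  -- operator norm bound for W * Q via its adjoint R * W
  have hWQ : ‖W * Q‖ ^ 2 ≤ g ^ 2 + e ^ 2 - g ^ 2 * e ^ 2 := by
    have hρ0 : (0:ℝ) ≤ g ^ 2 + e ^ 2 - g ^ 2 * e ^ 2 := by
      nlinarith [mul_nonneg (sq_nonneg g) (show (0:ℝ) ≤ 1 - e ^ 2 by nlinarith), sq_nonneg e]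
    have hnorm : ‖W * Q‖ = ‖R * W‖ := by
      have : star (W * Q) = R * W := by rw [StarMul.star_mul, hW.star_eq, hRdef]
      rw [← this, norm_star]
    rw [hnorm]
    have hb : ‖R * W‖ ≤ Real.sqrt (g ^ 2 + e ^ 2 - g ^ 2 * e ^ 2) := by
      refine ContinuousLinearMap.opNorm_le_bound _ (Real.sqrt_nonneg _) fun u => ?_
      have h1 := core_bound W D R g e hW hWW hD hDD hRD hDR hgD hRe hg0 he0 he1 u
      have : ‖(R * W) u‖ = Real.sqrt (‖(R * W) u‖ ^ 2) := by
        rw [Real.sqrt_sq (norm_nonneg _)]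
      rw [this]
      calc Real.sqrt (‖(R * W) u‖ ^ 2)
          ≤ Real.sqrt ((g ^ 2 + e ^ 2 - g ^ 2 * e ^ 2) * ‖u‖ ^ 2) := Real.sqrt_le_sqrt h1
        _ = Real.sqrt (g ^ 2 + e ^ 2 - g ^ 2 * e ^ 2) * ‖u‖ := by
            rw [Real.sqrt_mul hρ0, Real.sqrt_sq (norm_nonneg _)]
    have := pow_le_pow_left₀ (norm_nonneg _) hb 2
    rwa [Real.sq_sqrt hρ0] at this
  -- now the per-vector bound for M * Q - C
  have hA0 : (0:ℝ) ≤ 1 - a ^ 2 := by nlinarith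
  have hG0 : (0:ℝ) ≤ 1 - g ^ 2 := by nlinarith
  have hE0 : (0:ℝ) ≤ 1 - e ^ 2 := by nlinarith
  have hGE0 : (0:ℝ) ≤ (1 - g ^ 2) * (1 - e ^ 2) := mul_nonneg hG0 hE0
  have hGE1 : (1 - g ^ 2) * (1 - e ^ 2) ≤ 1 := by nlinarith
  have hprod0 : (0:ℝ) ≤ (1 - a ^ 2) * (1 - g ^ 2) * (1 - e ^ 2) := by
    rw [mul_assoc]; exact mul_nonneg hA0 hGE0
  have hprod1 : (1 - a ^ 2) * (1 - g ^ 2) * (1 - e ^ 2) ≤ 1 := by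
    rw [mul_assoc]; nlinarith
  have hRt0 : (0:ℝ) ≤ 1 - (1 - a ^ 2) * (1 - g ^ 2) * (1 - e ^ 2) := by linarith
  have claim : ∀ w : E, C w = 0 → ‖(M * Q) w‖ ^ 2 ≤
      (1 - (1 - a ^ 2) * (1 - g ^ 2) * (1 - e ^ 2)) * ‖w‖ ^ 2 := by
    intro w hCw
    have hCu : C (Q w) = 0 := by
      have h1 : C (Q w) = (C * Q) w := rfl
      rw [h1, hCQ]; exact hCw
    have hMQw : (M * Q) w = M (Q w) := rfl
    have hPMP : P * (M - P) = 0 := by rw [mul_sub, hPM, hPP, sub_self]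
    have hfixP : P (P (Q w)) = P (Q w) := by rw [← clm_mul_app, hPP]
    have hkillP : P ((M - P) (Q w)) = 0 := by
      have h2 := congrArg (fun S : E →L[ℂ] E => S (Q w)) hPMP
      simpa [clm_mul_app] using h2
    have hMu : M (Q w) = P (Q w) + (M - P) (Q w) := by
      simp [ContinuousLinearMap.sub_apply]
    have hpyM : ‖M (Q w)‖ ^ 2 = ‖P (Q w)‖ ^ 2 + ‖(M - P) (Q w)‖ ^ 2 := by
      rw [hMu]; exact orth_norm_sq hP _ _ hfixP hkillP
    have hMPu : ‖(M - P) (Q w)‖ ≤ a * ‖Q w - P (Q w)‖ := by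
      have hMPP : (M - P) * P = 0 := by rw [sub_mul, hMP, hPP, sub_self]
      have h2 : (M - P) (P (Q w)) = 0 := by
        have h3 := congrArg (fun S : E →L[ℂ] E => S (Q w)) hMPP
        simpa [clm_mul_app] using h3
      have h1 : (M - P) (Q w) = (M - P) (Q w - P (Q w)) := by
        rw [map_sub, h2, sub_zero]
      rw [h1]
      calc ‖(M - P) (Q w - P (Q w))‖ ≤ ‖M - P‖ * ‖Q w - P (Q w)‖ :=
            (M - P).le_opNorm _
        _ ≤ a * ‖Q w - P (Q w)‖ := by gcongr
    have hpyP := proj_pyth hP hPP (Q w)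
    have huw : ‖Q w‖ ≤ ‖w‖ := by
      calc ‖Q w‖ ≤ ‖Q‖ * ‖w‖ := Q.le_opNorm w
        _ ≤ 1 * ‖w‖ := by gcongr
        _ = ‖w‖ := one_mul _
    have hPu : P (Q w) = (W * Q) w := by
      have h1 : (W * Q) w = P (Q w) - C (Q w) := rfl
      rw [h1, hCu, sub_zero]
    have hPu2 : ‖P (Q w)‖ ^ 2 ≤ (g ^ 2 + e ^ 2 - g ^ 2 * e ^ 2) * ‖w‖ ^ 2 := by
      rw [hPu]
      have h1 : ‖(W * Q) w‖ ≤ ‖W * Q‖ * ‖w‖ := (W * Q).le_opNorm w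
      nlinarith [norm_nonneg ((W * Q) w), norm_nonneg (W * Q), norm_nonneg w, hWQ,
        sq_nonneg ‖w‖]
    have h3 : ‖(M - P) (Q w)‖ ^ 2 ≤ a ^ 2 * ‖Q w - P (Q w)‖ ^ 2 := by
      nlinarith [norm_nonneg ((M - P) (Q w)), norm_nonneg (Q w - P (Q w))]
    have h4 : ‖Q w‖ ^ 2 ≤ ‖w‖ ^ 2 := by nlinarith [norm_nonneg (Q w), norm_nonneg w]
    have h5 : (1 - a ^ 2) * ‖P (Q w)‖ ^ 2 ≤
        (1 - a ^ 2) * ((g ^ 2 + e ^ 2 - g ^ 2 * e ^ 2) * ‖w‖ ^ 2) :=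
      mul_le_mul_of_nonneg_left hPu2 hA0
    have h6 : a ^ 2 * ‖Q w‖ ^ 2 ≤ a ^ 2 * ‖w‖ ^ 2 :=
      mul_le_mul_of_nonneg_left h4 (sq_nonneg a)
    have h7 : a ^ 2 * (‖P (Q w)‖ ^ 2 + ‖Q w - P (Q w)‖ ^ 2) = a ^ 2 * ‖Q w‖ ^ 2 := by
      rw [hpyP]
    rw [hMQw]
    linarith [hpyM, h3, h5, h6, h7]
  have hmain : ∀ v : E, ‖(M * Q - C) v‖ ≤
      Real.sqrt (1 - (1 - a ^ 2) * (1 - g ^ 2) * (1 - e ^ 2)) * ‖v‖ := by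
    intro v
    have hCw : C (v - C v) = 0 := by
      have h1 : C (C v) = C v := by rw [← clm_mul_app, hCC]
      rw [map_sub, h1, sub_self]
    have hVC : (M * Q - C) v = (M * Q) (v - C v) := by
      have hMQC : (M * Q) * C = C := by
        rw [mul_assoc, hQC]
        have : M * (P * C) = (M * P) * C := by rw [mul_assoc]
        rw [hPC] at this
        rw [this, hMP, hPC]
      have h2 : (M * Q) (C v) = C v := by
        have h3 : (M * Q) (C v) = ((M * Q) * C) v := rfl
        rw [h3, hMQC]
      rw [map_sub, h2]
      rfl
    have hwv : ‖v - C v‖ ≤ ‖v‖ := by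
      have h1 := proj_pyth hC hCC v
      refine norm_le_of_sq_le_sq ?_ (norm_nonneg _) (norm_nonneg _)
      nlinarith [sq_nonneg ‖C v‖]
    have hcl := claim (v - C v) hCw
    rw [hVC]
    have h1 : ‖(M * Q) (v - C v)‖ = Real.sqrt (‖(M * Q) (v - C v)‖ ^ 2) :=
      (Real.sqrt_sq (norm_nonneg _)).symm
    rw [h1]
    calc Real.sqrt (‖(M * Q) (v - C v)‖ ^ 2)
        ≤ Real.sqrt ((1 - (1 - a ^ 2) * (1 - g ^ 2) * (1 - e ^ 2)) * ‖v - C v‖ ^ 2) :=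
          Real.sqrt_le_sqrt hcl
      _ = Real.sqrt (1 - (1 - a ^ 2) * (1 - g ^ 2) * (1 - e ^ 2)) * ‖v - C v‖ := by
          rw [Real.sqrt_mul hRt0, Real.sqrt_sq (norm_nonneg _)]
      _ ≤ Real.sqrt (1 - (1 - a ^ 2) * (1 - g ^ 2) * (1 - e ^ 2)) * ‖v‖ := by gcongr
  have hop : ‖M * Q - C‖ ≤ Real.sqrt (1 - (1 - a ^ 2) * (1 - g ^ 2) * (1 - e ^ 2)) :=
    ContinuousLinearMap.opNorm_le_bound _ (Real.sqrt_nonneg _) hmain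
  have hfin := pow_le_pow_left₀ (norm_nonneg _) hop 2
  rwa [Real.sq_sqrt hRt0] at hfin

end Step

/-- Arithmetic helper: `(2-x)^(m+1) (2-f)^m ≥ 2 - x^(m+1) f^m` on `[0,1]`. -/
lemma two_sub_pow_ge {x f : ℝ} (hx0 : 0 ≤ x) (hx1 : x ≤ 1) (hf0 : 0 ≤ f) (hf1 : f ≤ 1) :
    ∀ m : ℕ, 2 - x ^ (m + 1) * f ^ m ≤ (2 - x) ^ (m + 1) * (2 - f) ^ m := by
  intro m
  induction m with
  | zero => simp
  | succ m ih =>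
    have hu0 : 0 ≤ x ^ (m + 1) * f ^ m := mul_nonneg (pow_nonneg hx0 _) (pow_nonneg hf0 _)
    have hu1 : x ^ (m + 1) * f ^ m ≤ 1 :=
      mul_le_one₀ (pow_le_one₀ hx0 hx1) (pow_nonneg hf0 _) (pow_le_one₀ hf0 hf1)
    have hA0 : (0:ℝ) ≤ (2 - x) ^ (m + 1) * (2 - f) ^ m :=
      mul_nonneg (pow_nonneg (by linarith) _) (pow_nonneg (by linarith) _)
    have hxf0 : (0:ℝ) ≤ (2 - x) * (2 - f) := mul_nonneg (by linarith) (by linarith)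
    have h1 : ((2 - x) ^ (m + 1) * (2 - f) ^ m) * ((2 - x) * (2 - f)) =
        (2 - x) ^ (m + 1 + 1) * (2 - f) ^ (m + 1) := by ring
    have h2 : (2 - x ^ (m + 1) * f ^ m) * ((2 - x) * (2 - f)) ≤
        ((2 - x) ^ (m + 1) * (2 - f) ^ m) * ((2 - x) * (2 - f)) :=
      mul_le_mul_of_nonneg_right ih hxf0
    have h3 : 2 - (x ^ (m + 1) * f ^ m) * (x * f) ≤
        (2 - x ^ (m + 1) * f ^ m) * ((2 - x) * (2 - f)) := by
      nlinarith [mul_nonneg (sub_nonneg.mpr hu1) (sub_nonneg.mpr hx1),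
        mul_nonneg (mul_nonneg (sub_nonneg.mpr hu1) (sub_nonneg.mpr hx1)) (sub_nonneg.mpr hf1),
        mul_nonneg hu0 hx0, mul_nonneg (mul_nonneg hu0 hx0) hf0,
        mul_nonneg (sub_nonneg.mpr hx1) (sub_nonneg.mpr hf1),
        mul_nonneg hu0 (mul_nonneg (sub_nonneg.mpr hx1) (sub_nonneg.mpr hf1))]
    have h4 : x ^ (m + 1 + 1) * f ^ (m + 1) = (x ^ (m + 1) * f ^ m) * (x * f) := by ring
    calc 2 - x ^ (m + 1 + 1) * f ^ (m + 1)
        = 2 - (x ^ (m + 1) * f ^ m) * (x * f) := by rw [h4]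
      _ ≤ (2 - x ^ (m + 1) * f ^ m) * ((2 - x) * (2 - f)) := h3
      _ ≤ ((2 - x) ^ (m + 1) * (2 - f) ^ m) * ((2 - x) * (2 - f)) := h2
      _ = (2 - x) ^ (m + 1 + 1) * (2 - f) ^ (m + 1) := h1




open Matrix

/-- Proposition S3, abstracted.  For an `l`-layer connected block with
layer moment operators `M j`, cluster projectors `P j` and combined projectors `C j`,
if all local gaps satisfy `1 - ‖M j - P j‖² ≥ 1 - (1-x)²` and all `γ`-quantities satisfy
`1 - ‖P j C (j-1) - C j‖² ≥ 1 - (1-f)²`, then the block spectral gap is at least `x^l f^(l-1)`. -/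
theorem nonHaar_block_gap_lower_bound
    (n l : ℕ) (hn : 1 ≤ n) (hl : 1 ≤ l)
    (M P C : ℕ → Matrix (Fin n) (Fin n) ℂ)
    (hMnorm : ∀ j, 1 ≤ j → j ≤ l → opNorm (M j) ≤ 1)
    (hP_herm : ∀ j, 1 ≤ j → j ≤ l → (P j)ᴴ = P j)
    (hP_idem : ∀ j, 1 ≤ j → j ≤ l → P j * P j = P j)
    (hMP : ∀ j, 1 ≤ j → j ≤ l → M j * P j = P j ∧ P j * M j = P j)
    (hMPnorm : ∀ j, 1 ≤ j → j ≤ l → opNorm (M j - P j) ≤ 1)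
    (hC_herm : ∀ j, 1 ≤ j → j ≤ l → (C j)ᴴ = C j)
    (hC_idem : ∀ j, 1 ≤ j → j ≤ l → C j * C j = C j)
    (hC1 : C 1 = P 1)
    (hPC : ∀ j, 2 ≤ j → j ≤ l → P j * C j = C j ∧ C j * P j = C j)
    (hCC : ∀ j, 2 ≤ j → j ≤ l → C (j - 1) * C j = C j ∧ C j * C (j - 1) = C j)
    (hMCl : ∀ j, 1 ≤ j → j ≤ l → M j * C l = C l ∧ C l * M j = C l)
    (x f : ℝ) (hx0 : 0 ≤ x) (hx1 : x ≤ 1) (hf0 : 0 ≤ f) (hf1 : f ≤ 1)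
    (hα : ∀ j, 1 ≤ j → j ≤ l → 1 - opNorm (M j - P j) ^ 2 ≥ 1 - (1 - x) ^ 2)
    (hγ : ∀ j, 2 ≤ j → j ≤ l → 1 - opNorm (P j * C (j - 1) - C j) ^ 2 ≥ 1 - (1 - f) ^ 2) :
    1 - opNorm ((List.ofFn fun j : Fin l => M (j.val + 1)).reverse.prod - C l) ≥
      x ^ l * f ^ (l - 1) := by
  classical
  -- notation
  have hopd : ∀ A : Matrix (Fin n) (Fin n) ℂ,
      opNorm A = ‖Matrix.toEuclideanCLM (𝕜 := ℂ) A‖ := fun _ => rfl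
  set φ : Matrix (Fin n) (Fin n) ℂ ≃⋆ₐ[ℂ]
      (EuclideanSpace ℂ (Fin n) →L[ℂ] EuclideanSpace ℂ (Fin n)) :=
    Matrix.toEuclideanCLM (𝕜 := ℂ) with hφdef
  have hsa : ∀ A : Matrix (Fin n) (Fin n) ℂ, Aᴴ = A → IsSelfAdjoint (φ A) := by
    intro A hA
    have h1 : star A = A := by rw [Matrix.star_eq_conjTranspose, hA]
    show star (φ A) = φ A
    rw [← map_star φ A, h1]
  -- the partial products
  let Qm : ℕ → Matrix (Fin n) (Fin n) ℂ :=
    fun k => (List.ofFn fun j : Fin k => M (j.val + 1)).reverse.prod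
  have hQsucc : ∀ k, Qm (k + 1) = M (k + 1) * Qm k := by
    intro k
    show (List.ofFn fun j : Fin (k+1) => M (j.val + 1)).reverse.prod
        = M (k + 1) * (List.ofFn fun j : Fin k => M (j.val + 1)).reverse.prod
    rw [List.ofFn_succ']
    simp [List.reverse_concat, List.prod_cons]
  -- chains of projectors
  have hCchain : ∀ j m, 1 ≤ j → j ≤ m → m ≤ l → C j * C m = C m ∧ C m * C j = C m := by
    intro j m hj hjm
    induction m, hjm using Nat.le_induction with
    | base => intro hml; exact ⟨hC_idem j hj hml, hC_idem j hj hml⟩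
    | succ m hjm ih =>
      intro hml
      have hml' : m ≤ l := by omega
      obtain ⟨ih1, ih2⟩ := ih hml'
      obtain ⟨hcc1, hcc2⟩ := hCC (m + 1) (by omega) hml
      rw [Nat.add_sub_cancel] at hcc1 hcc2
      constructor
      · rw [← hcc1, ← mul_assoc, ih1]
      · rw [← hcc2, mul_assoc, ih2]
  have hMCm : ∀ j m, 1 ≤ j → j ≤ m → m ≤ l → M j * C m = C m ∧ C m * M j = C m := by
    intro j m hj hjm hml
    have hjl : j ≤ l := le_trans hjm hml
    have hMCj : M j * C j = C j ∧ C j * M j = C j := by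
      rcases Nat.lt_or_ge j 2 with h2 | h2
      · have hj1 : j = 1 := by omega
        subst hj1
        rw [hC1]
        exact hMP 1 le_rfl hjl
      · obtain ⟨hpc1, hpc2⟩ := hPC j h2 hjl
        obtain ⟨hmp1, hmp2⟩ := hMP j hj hjl
        constructor
        · rw [← hpc1, ← mul_assoc, hmp1]
        · rw [← hpc2, mul_assoc, hmp2]
      
    obtain ⟨hch1, hch2⟩ := hCchain j m hj hjm hml
    constructor
    · rw [← hch1, ← mul_assoc, hMCj.1]
    · rw [← hch2, mul_assoc, hMCj.2]
  have hQCm : ∀ k m, k ≤ m → 1 ≤ m → m ≤ l → Qm k * C m = C m ∧ C m * Qm k = C m := by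
    intro k
    induction k with
    | zero =>
      intro m _ _ _
      have h0 : Qm 0 = 1 := by simp [Qm]
      rw [h0, one_mul, mul_one]
      exact ⟨rfl, rfl⟩
    | succ k ih =>
      intro m hkm h1m hml
      obtain ⟨ih1, ih2⟩ := ih m (by omega) h1m hml
      obtain ⟨hm1, hm2⟩ := hMCm (k + 1) m (by omega) hkm hml
      rw [hQsucc k]
      constructor
      · rw [mul_assoc, ih1, hm1]
      · rw [← mul_assoc, hm2, ih2]
  have hQnorm1 : ∀ k, k ≤ l → ‖φ (Qm k)‖ ≤ 1 := by
    intro k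
    induction k with
    | zero =>
      intro _
      have h0 : Qm 0 = 1 := by simp [Qm]
      rw [h0, _root_.map_one]
      exact ContinuousLinearMap.norm_id_le
    | succ k ih =>
      intro hkl
      rw [hQsucc k, _root_.map_mul]
      calc ‖φ (M (k + 1)) * φ (Qm k)‖ ≤ ‖φ (M (k + 1))‖ * ‖φ (Qm k)‖ := norm_mul_le _ _
        _ ≤ 1 * 1 := by
            have hm := hMnorm (k + 1) (by omega) hkl
            rw [hopd] at hm
            exact mul_le_mul hm (ih (by omega)) (norm_nonneg _) zero_le_one
        _ = 1 := one_mul 1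
  -- the key induction
  have key : ∀ k, k + 1 ≤ l →
      opNorm (Qm (k + 1) - C (k + 1)) ^ 2 ≤ 1 - (x * (2 - x)) ^ (k + 1) * (f * (2 - f)) ^ k := by
    intro k
    induction k with
    | zero =>
      intro h1l
      have hQ1 : Qm 1 = M 1 := by
        show (List.ofFn fun j : Fin 1 => M (j.val + 1)).reverse.prod = M 1
        simp
      have ha := hα 1 le_rfl h1l
      rw [hQ1, hC1]
      have hxx : (1:ℝ) - (1 - x) ^ 2 = x * (2 - x) := by ring
      simp only [zero_add, pow_one, pow_zero, mul_one]
      nlinarith [ha]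
    | succ k ih =>
      intro hk2l
      have hk1l : k + 1 ≤ l := by omega
      have hIH := ih hk1l
      -- abbreviations
      have ha := hα (k + 2) (by omega) hk2l
      have hg := hγ (k + 2) (by omega) hk2l
      have hsub : k + 2 - 1 = k + 1 := by omega
      rw [hsub] at hg
      set a : ℝ := opNorm (M (k + 2) - P (k + 2)) with hadef
      set g : ℝ := opNorm (P (k + 2) * C (k + 1) - C (k + 2)) with hgdef
      set e : ℝ := opNorm (Qm (k + 1) - C (k + 1)) with hedef
      have ha0 : 0 ≤ a := by rw [hadef, hopd]; exact norm_nonneg _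
      have hg0 : 0 ≤ g := by rw [hgdef, hopd]; exact norm_nonneg _
      have he0 : 0 ≤ e := by rw [hedef, hopd]; exact norm_nonneg _
      have ha1 : a ≤ 1 := by
        refine norm_le_of_sq_le_sq ?_ ha0 zero_le_one
        nlinarith [ha]
      have hg1 : g ≤ 1 := by
        refine norm_le_of_sq_le_sq ?_ hg0 zero_le_one
        nlinarith [hg]
      have hp1 : (0:ℝ) ≤ x * (2 - x) := by nlinarith
      have hp2 : (0:ℝ) ≤ f * (2 - f) := by nlinarith
      have hpk : (0:ℝ) ≤ (x * (2 - x)) ^ (k + 1) * (f * (2 - f)) ^ k :=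
        mul_nonneg (pow_nonneg hp1 _) (pow_nonneg hp2 _)
      have he1 : e ≤ 1 := by
        refine norm_le_of_sq_le_sq ?_ he0 zero_le_one
        nlinarith [hIH]
      -- apply the step bound
      obtain ⟨hmp1, hmp2⟩ := hMP (k + 2) (by omega) hk2l
      obtain ⟨hpc1, hpc2⟩ := hPC (k + 2) (by omega) hk2l
      obtain ⟨hcc1, hcc2⟩ := hCC (k + 2) (by omega) hk2l
      rw [hsub] at hcc1 hcc2
      obtain ⟨hqd1, hqd2⟩ := hQCm (k + 1) (k + 1) le_rfl (by omega) hk1l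
      obtain ⟨hqc1, hqc2⟩ := hQCm (k + 1) (k + 2) (by omega) (by omega) hk2l
      have hstep := step_bound_s9 (E := EuclideanSpace ℂ (Fin n))
        (φ (M (k + 2))) (φ (P (k + 2))) (φ (C (k + 2))) (φ (C (k + 1))) (φ (Qm (k + 1)))
        a g e
        (hsa _ (hP_herm (k + 2) (by omega) hk2l))
        (hsa _ (hC_herm (k + 2) (by omega) hk2l))
        (hsa _ (hC_herm (k + 1) (by omega) hk1l))
        (by rw [← _root_.map_mul]; exact congrArg φ (hP_idem (k + 2) (by omega) hk2l))
        (by rw [← _root_.map_mul]; exact congrArg φ (hC_idem (k + 2) (by omega) hk2l))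
        (by rw [← _root_.map_mul]; exact congrArg φ (hC_idem (k + 1) (by omega) hk1l))
        (by rw [← _root_.map_mul]; exact congrArg φ hpc1)
        (by rw [← _root_.map_mul]; exact congrArg φ hpc2)
        (by rw [← _root_.map_mul]; exact congrArg φ hcc1)
        (by rw [← _root_.map_mul]; exact congrArg φ hmp1)
        (by rw [← _root_.map_mul]; exact congrArg φ hmp2)
        (by rw [← _root_.map_mul]; exact congrArg φ hqd1)
        (by rw [← _root_.map_mul]; exact congrArg φ hqd2)
        (by rw [← _root_.map_mul]; exact congrArg φ hqc1)
        (by rw [← _root_.map_mul]; exact congrArg φ hqc2)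
        (hQnorm1 (k + 1) hk1l)
        (by rw [hadef, hopd, _root_.map_sub])
        (by rw [hgdef, hopd, _root_.map_sub, _root_.map_mul])
        (by rw [hedef, hopd, _root_.map_sub])
        ha0 ha1 hg0 hg1 he0 he1
      have hnorm : opNorm (Qm (k + 2) - C (k + 2)) ^ 2 =
          ‖φ (M (k + 2)) * φ (Qm (k + 1)) - φ (C (k + 2))‖ ^ 2 := by
        rw [hopd, _root_.map_sub]
        congr 2
        rw [show k + 2 = (k + 1) + 1 from rfl, hQsucc (k + 1), _root_.map_mul]
      rw [hnorm]
      refine le_trans hstep ?_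
      -- arithmetic: compare the products
      have hA : x * (2 - x) ≤ 1 - a ^ 2 := by nlinarith [ha]
      have hB : f * (2 - f) ≤ 1 - g ^ 2 := by nlinarith [hg]
      have hE : (x * (2 - x)) ^ (k + 1) * (f * (2 - f)) ^ k ≤ 1 - e ^ 2 := by
        nlinarith [hIH]
      have hAB : (x * (2 - x)) * (f * (2 - f)) ≤ (1 - a ^ 2) * (1 - g ^ 2) :=
        mul_le_mul hA hB hp2 (by linarith)
      have hfull : (x * (2 - x)) * (f * (2 - f)) *
          ((x * (2 - x)) ^ (k + 1) * (f * (2 - f)) ^ k) ≤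
          (1 - a ^ 2) * (1 - g ^ 2) * (1 - e ^ 2) :=
        mul_le_mul hAB hE hpk (mul_nonneg (by linarith) (by linarith))
      have heq : (x * (2 - x)) ^ (k + 1 + 1) * (f * (2 - f)) ^ (k + 1) =
          (x * (2 - x)) * (f * (2 - f)) *
            ((x * (2 - x)) ^ (k + 1) * (f * (2 - f)) ^ k) := by ring
      rw [heq]
      linarith
  -- conclude
  have hll : l - 1 + 1 = l := by omega
  have hkey := key (l - 1) (by omega)
  rw [hll] at hkey
  have hgoal : (List.ofFn fun j : Fin l => M (j.val + 1)).reverse.prod = Qm l := rfl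
  rw [hgoal]
  set εn : ℝ := opNorm (Qm l - C l) with hεdef
  have hε0 : 0 ≤ εn := by rw [hεdef, hopd]; exact norm_nonneg _
  -- arithmetic
  have hc0 : (0:ℝ) ≤ x ^ l * f ^ (l - 1) :=
    mul_nonneg (pow_nonneg hx0 _) (pow_nonneg hf0 _)
  have hc1 : x ^ l * f ^ (l - 1) ≤ 1 :=
    mul_le_one₀ (pow_le_one₀ hx0 hx1) (pow_nonneg hf0 _) (pow_le_one₀ hf0 hf1)
  have hEbig := two_sub_pow_ge hx0 hx1 hf0 hf1 (l - 1)
  rw [hll] at hEbig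
  -- rewrite the key bound
  have hsplit : (x * (2 - x)) ^ l * (f * (2 - f)) ^ (l - 1) =
      (x ^ l * f ^ (l - 1)) * ((2 - x) ^ l * (2 - f) ^ (l - 1)) := by
    rw [mul_pow, mul_pow]; ring
  rw [hsplit] at hkey
  have hcE : (x ^ l * f ^ (l - 1)) * (2 - x ^ l * f ^ (l - 1)) ≤
      (x ^ l * f ^ (l - 1)) * ((2 - x) ^ l * (2 - f) ^ (l - 1)) :=
    mul_le_mul_of_nonneg_left hEbig hc0
  have hsq : εn ^ 2 ≤ (1 - x ^ l * f ^ (l - 1)) ^ 2 := by nlinarith [hkey, hcE]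
  have hfin : εn ≤ 1 - x ^ l * f ^ (l - 1) :=
    norm_le_of_sq_le_sq hsq hε0 (by linarith)
  linarith
end

section
/- Let n ≥ 1, let P be an n×n orthogonal projection, and let B_1, …, B_K be n×n complex matrices with B_i P = P B_i = P for all i and 1 − ‖B_i − P‖ ≥ x_i^l · f^{l−1} for some reals x_i ∈ [0,1], a real f ∈ (0,1], and an integer l ≥ 1. Let N, t ≥ 1 be integers, d ≥ 2 an integer, ε ∈ (0,1], and x ∈ (0,1] with (1/K)·∑_{i=1}^{K} x_i ≥ x. If K ≥ x^{−l}·f^{−(l−1)}·(2·N·t·log d − log ε), then ‖B_K ⋯ B_2 B_1 − P‖ ≤ ε·d^{−2Nt}. -/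
open Matrix

/-!
Because `P` absorbs every block, `B_K ⋯ B_1 - P = (B_K - P) ⋯ (B_1 - P)`, so the norm is at
most `∏ (1 - x_i^l f^(l-1)) ≤ exp (-f^(l-1) ∑ x_i^l)`. Convexity of `x ↦ x^l` gives
`∑ x_i^l ≥ K x^l`, and the depth condition then makes the exponent at least
`2 N t log d - log ε`.
-/

open Finset Real

theorem List.mul_prod_eq_of_forall_mul_eq {M : Type*} [Monoid M] {p : M} {l : List M}
    (h : ∀ a ∈ l, p * a = p) : p * l.prod = p :=
  l.prod_induction (p * · = p) (fun a b ha hb => by rw [← mul_assoc, ha, hb]) (mul_one p) h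

theorem List.prod_sub_eq_prod_map_sub {R : Type*} [Ring R] {p : R} (hp : IsIdempotentElem p) :
    ∀ {l : List R}, l ≠ [] → (∀ a ∈ l, a * p = p) → (∀ a ∈ l, p * a = p) →
      l.prod - p = (l.map (· - p)).prod
  | [], hl, _, _ => (hl rfl).elim
  | [a], _, _, _ => by simp
  | a :: b :: l, _, hr, hlft => by
    have ih := List.prod_sub_eq_prod_map_sub hp (l := b :: l) (List.cons_ne_nil b l)
      (fun c hc => hr c (List.mem_cons_of_mem a hc))
      (fun c hc => hlft c (List.mem_cons_of_mem a hc))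
    have hpq : p * (b :: l).prod = p :=
      List.mul_prod_eq_of_forall_mul_eq fun c hc => hlft c (List.mem_cons_of_mem a hc)
    rw [List.map_cons, List.prod_cons (a := a - p), ← ih, List.prod_cons, sub_mul, mul_sub,
      mul_sub, hr a List.mem_cons_self, hpq, hp.eq]
    abel

theorem List.norm_prod_sub_le {R : Type*} [SeminormedRing R] {p : R} (hp : IsIdempotentElem p)
    {l : List R} (hl : l ≠ []) (hr : ∀ a ∈ l, a * p = p) (hlft : ∀ a ∈ l, p * a = p) :
    ‖l.prod - p‖ ≤ (l.map (‖· - p‖)).prod := by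
  rw [List.prod_sub_eq_prod_map_sub hp hl hr hlft]
  exact (List.norm_prod_le' (by simpa using hl)).trans_eq (by simp [Function.comp_def])

theorem opNorm_ofFn_reverse_prod_sub_le {m : Type*} [Fintype m] [DecidableEq m] {K : ℕ}
    (hK : 0 < K) {P : Matrix m m ℂ} (hP : P * P = P) {B : Fin K → Matrix m m ℂ}
    (hBP : ∀ i, B i * P = P) (hPB : ∀ i, P * B i = P) :
    opNorm ((List.ofFn B).reverse.prod - P) ≤ ∏ i, opNorm (B i - P) := by
  set T := Matrix.toEuclideanCLM (𝕜 := ℂ) (n := m)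
  have key := List.norm_prod_sub_le (p := T P) (l := (List.ofFn fun i => T (B i)).reverse)
    (by simpa [IsIdempotentElem] using congrArg T hP)
    (by simp [List.ofFn_eq_nil_iff, hK.ne'])
    (by simp [← map_mul, hBP]) (by simp [← map_mul, hPB])
  calc opNorm ((List.ofFn B).reverse.prod - P)
      = ‖(List.ofFn fun i => T (B i)).reverse.prod - T P‖ := by
        simp [opNorm, T, map_list_prod, List.map_reverse, List.map_ofFn, Function.comp_def]
    _ ≤ _ := key
    _ = ∏ i, opNorm (B i - P) := by
        simp [opNorm, T, List.map_reverse, List.map_ofFn, List.prod_ofFn, Function.comp_def]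

theorem Finset.prod_le_exp_neg_sum {ι : Type*} (s : Finset ι) {a g : ι → ℝ}
    (ha : ∀ i ∈ s, 0 ≤ a i) (h : ∀ i ∈ s, a i ≤ 1 - g i) :
    ∏ i ∈ s, a i ≤ exp (-∑ i ∈ s, g i) := by
  rw [← sum_neg_distrib, exp_sum]
  exact prod_le_prod ha fun i hi => (h i hi).trans (by linarith [add_one_le_exp (-g i)])

theorem Finset.card_mul_pow_le_sum_pow {ι : Type*} {s : Finset ι} {x : ℝ} {y : ι → ℝ}
    (hx : 0 ≤ x) (hy : ∀ i ∈ s, 0 ≤ y i) (h : #s * x ≤ ∑ i ∈ s, y i) (n : ℕ) :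
    #s * x ^ n ≤ ∑ i ∈ s, y i ^ n := by
  obtain rfl | hs := s.eq_empty_or_nonempty
  · simp
  cases n with
  | zero => simp
  | succ n =>
    have hcard : (0 : ℝ) < #s ^ n := by positivity
    refine le_of_mul_le_mul_left ?_ hcard
    calc (#s : ℝ) ^ n * (#s * x ^ (n + 1)) = (#s * x) ^ (n + 1) := by ring
      _ ≤ (∑ i ∈ s, y i) ^ (n + 1) := pow_le_pow_left₀ (by positivity) h _
      _ ≤ #s ^ n * ∑ i ∈ s, y i ^ (n + 1) := pow_sum_le_card_mul_sum_pow hy n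

theorem zpow_neg_mul_zpow_neg_sub_one {α : Type*} [DivisionCommMonoid α] (x f : α) {l : ℕ}
    (hl : 1 ≤ l) : x ^ (-(l : ℤ)) * f ^ (-((l : ℤ) - 1)) = (x ^ l * f ^ (l - 1))⁻¹ := by
  rw [← Nat.cast_one, ← Nat.cast_sub hl, _root_.zpow_neg, _root_.zpow_neg, zpow_natCast,
    zpow_natCast, mul_inv]

theorem Real.exp_neg_mul_log_sub_log {ε d : ℝ} (hε : 0 < ε) (hd : 0 < d) (k : ℕ) :
    exp (-(k * log d - log ε)) = ε * (d ^ k)⁻¹ := by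
  rw [neg_sub, exp_sub, exp_log hε, ← log_pow, exp_log (by positivity), div_eq_mul_inv]

theorem fixed_architecture_design_depth_general
    (n K : ℕ)
    (P : Matrix (Fin n) (Fin n) ℂ) (hP_idem : P * P = P)
    (B : Fin K → Matrix (Fin n) (Fin n) ℂ)
    (hBP : ∀ i, B i * P = P) (hPB : ∀ i, P * B i = P)
    (l : ℕ) (hl : 1 ≤ l)
    (x : ℝ) (hx0 : 0 < x)
    (f : ℝ) (hf0 : 0 < f)
    (xi : Fin K → ℝ) (hxi0 : ∀ i, 0 ≤ xi i)
    (hgap : ∀ i, 1 - opNorm (B i - P) ≥ xi i ^ l * f ^ (l - 1))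
    (N t d : ℕ) (hN : 1 ≤ N) (ht : 1 ≤ t) (hd : 2 ≤ d)
    (ε : ℝ) (hε0 : 0 < ε) (hε1 : ε ≤ 1)
    (hav : (1 / (K : ℝ)) * ∑ i, xi i ≥ x)
    (hK : (K : ℝ) ≥ x ^ (-(l : ℤ)) * f ^ (-((l : ℤ) - 1)) *
      (2 * N * t * Real.log d - Real.log ε)) :
    opNorm ((List.ofFn B).reverse.prod - P) ≤ ε * ((d : ℝ) ^ (2 * N * t))⁻¹ := by
  set C := 2 * N * t * log d - log ε
  have hC : 0 < C := by
    have hNt : (0 : ℝ) < 2 * N * t := by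
      have : (0 : ℝ) < N ∧ (0 : ℝ) < t := ⟨by exact_mod_cast hN, by exact_mod_cast ht⟩
      positivity
    have hlogd : 0 < log d := log_pos (by exact_mod_cast hd)
    linarith [mul_pos hNt hlogd, log_nonpos hε0.le hε1]
  have hdepth : C ≤ (x ^ l * f ^ (l - 1)) * K := by
    rw [ge_iff_le, zpow_neg_mul_zpow_neg_sub_one x f hl] at hK
    exact (inv_mul_le_iff₀ (by positivity)).1 hK
  have hK0 : 0 < K := Nat.pos_of_ne_zero fun h => by subst h; simp at hdepth; linarith
  have hmean : (K : ℝ) * x ^ l ≤ ∑ i, xi i ^ l := by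
    have := card_mul_pow_le_sum_pow (s := univ) hx0.le (fun i _ => hxi0 i) ?_ l
    · simpa using this
    · rw [one_div, ge_iff_le, le_inv_mul_iff₀ (by exact_mod_cast hK0)] at hav
      simpa using hav
  calc opNorm ((List.ofFn B).reverse.prod - P)
      ≤ ∏ i, opNorm (B i - P) := opNorm_ofFn_reverse_prod_sub_le hK0 hP_idem hBP hPB
    _ ≤ exp (-∑ i, xi i ^ l * f ^ (l - 1)) :=
        prod_le_exp_neg_sum _ (fun i _ => norm_nonneg _) fun i _ => by linarith [hgap i]
    _ ≤ exp (-C) := by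
        rw [exp_le_exp, neg_le_neg_iff, ← sum_mul]
        calc C ≤ (x ^ l * f ^ (l - 1)) * K := hdepth
          _ = (K * x ^ l) * f ^ (l - 1) := by ring
          _ ≤ (∑ i, xi i ^ l) * f ^ (l - 1) := by gcongr
    _ = ε * ((d : ℝ) ^ (2 * N * t))⁻¹ := by
        simpa [C] using exp_neg_mul_log_sub_log hε0 (by positivity : (0 : ℝ) < d) (2 * N * t)

/-- Theorem S2 / Theorem 2 of the main text, abstracted.
A fixed-architecture circuit built from `K` connected blocks with moment operators `B i`,
Haar projector `P`, block gaps `1 - ‖B i - P‖ ≥ x_i^l f^(l-1)`, and averaged local gap at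
least `x`, forms an `ε`-approximate `t`-design once
`K ≥ x^(-l) f^(-(l-1)) (2 N t log d - log ε)`. -/
theorem fixed_architecture_design_depth
    (n K : ℕ) (hn : 1 ≤ n)
    (P : Matrix (Fin n) (Fin n) ℂ) (hP_herm : Pᴴ = P) (hP_idem : P * P = P)
    (B : Fin K → Matrix (Fin n) (Fin n) ℂ)
    (hBP : ∀ i, B i * P = P) (hPB : ∀ i, P * B i = P)
    (l : ℕ) (hl : 1 ≤ l)
    (x : ℝ) (hx0 : 0 < x) (hx1 : x ≤ 1)
    (f : ℝ) (hf0 : 0 < f) (hf1 : f ≤ 1)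
    (xi : Fin K → ℝ) (hxi0 : ∀ i, 0 ≤ xi i) (hxi1 : ∀ i, xi i ≤ 1)
    (hgap : ∀ i, 1 - opNorm (B i - P) ≥ xi i ^ l * f ^ (l - 1))
    (N t d : ℕ) (hN : 1 ≤ N) (ht : 1 ≤ t) (hd : 2 ≤ d)
    (ε : ℝ) (hε0 : 0 < ε) (hε1 : ε ≤ 1)
    (hav : (1 / (K : ℝ)) * ∑ i, xi i ≥ x)
    (hK : (K : ℝ) ≥ x ^ (-(l : ℤ)) * f ^ (-((l : ℤ) - 1)) *
      (2 * N * t * Real.log d - Real.log ε)) :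
    opNorm ((List.ofFn B).reverse.prod - P) ≤ ε * ((d : ℝ) ^ (2 * N * t))⁻¹ :=
  fixed_architecture_design_depth_general n K P hP_idem B hBP hPB l hl x hx0 f hf0 xi hxi0 hgap N t
    d hN ht hd ε hε0 hε1 hav hK
end

section
/- Let q ≥ 1, s ≥ 1, let V be a q×q complex unitary matrix, and let ν be a finite unitary ensemble on U(q) given by unitaries U_1, …, U_m with weights p_1, …, p_m ≥ 0 summing to 1. Then | ∑_k p_k·(|tr(V†U_k)|/q)^{2s} − ∫_{U(q)} (|tr(V†U)|/q)^{2s} dμ(U) | ≤ ‖M_ν^{(s)} − M_Haar^{(s)}‖. -/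
open Matrix MeasureTheory

noncomputable instance (q : ℕ) : MeasurableSpace (Matrix.unitaryGroup (Fin q) ℂ) := borel _
instance (q : ℕ) : BorelSpace (Matrix.unitaryGroup (Fin q) ℂ) := ⟨rfl⟩

/-- The matrix `U^{⊗s,s} = U^{⊗s} ⊗ (conj U)^{⊗s}`. -/
def tensorTT (q s : ℕ) (U : Matrix (Fin q) (Fin q) ℂ) :
    Matrix ((Fin s → Fin q) × (Fin s → Fin q)) ((Fin s → Fin q) × (Fin s → Fin q)) ℂ :=
  Matrix.of fun i j => (∏ r, U (i.1 r) (j.1 r)) * ∏ r, (starRingEnd ℂ) (U (i.2 r) (j.2 r))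

/-- The `s`-th moment operator `M_ν^{(s)} = ∑ₖ pₖ Uₖ^{⊗s,s}` of a finite unitary ensemble. -/
noncomputable def momentOp (q s m : ℕ) (p : Fin m → ℝ)
    (U : Fin m → Matrix.unitaryGroup (Fin q) ℂ) :
    Matrix ((Fin s → Fin q) × (Fin s → Fin q)) ((Fin s → Fin q) × (Fin s → Fin q)) ℂ :=
  ∑ k, (p k : ℂ) • tensorTT q s (U k : Matrix (Fin q) (Fin q) ℂ)

/-- The `s`-th Haar moment operator `M_Haar^{(s)} = ∫ U^{⊗s,s} dμ(U)`, defined entrywise. -/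
noncomputable def MHaarOp (q s : ℕ) (μ : Measure (Matrix.unitaryGroup (Fin q) ℂ)) :
    Matrix ((Fin s → Fin q) × (Fin s → Fin q)) ((Fin s → Fin q) × (Fin s → Fin q)) ℂ :=
  Matrix.of fun i j => ∫ U, tensorTT q s (U : Matrix (Fin q) (Fin q) ℂ) i j ∂μ

/-! The map `W ↦ W^{⊗s,s}` is multiplicative and `tr(W^{⊗s,s}) = |tr W|^{2s}`, so
`|tr(VᴴW)|^{2s} = tr((Vᴴ)^{⊗s,s} W^{⊗s,s})` is linear in `W^{⊗s,s}`. Hence `q^{2s}` times the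
difference of the two averages is `tr(A (M_ν - M_Haar))` with `A = (Vᴴ)^{⊗s,s}` unitary. Multiplying
by `A` does not change the operator norm, and each of the `q^{2s}` diagonal entries of a matrix is
bounded by its operator norm. -/

open scoped ComplexConjugate Matrix.Norms.L2Operator

lemma Matrix.prod_mul_apply {ι l m n R : Type*} [Fintype ι] [DecidableEq ι] [Fintype m]
    [CommSemiring R] (M : Matrix l m R) (N : Matrix m n R) (a : ι → l) (b : ι → n) :
    ∏ r, (M * N) (a r) (b r) = ∑ c : ι → m, (∏ r, M (a r) (c r)) * ∏ r, N (c r) (b r) := by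
  simp_rw [Matrix.mul_apply, Fintype.prod_sum, Finset.prod_mul_distrib]

section OperatorNorm

variable {𝕜 n : Type*} [RCLike 𝕜] [Fintype n] [DecidableEq n]

lemma Matrix.norm_apply_le_l2_opNorm (M : Matrix n n 𝕜) (i j : n) : ‖M i j‖ ≤ ‖M‖ := by
  set e : EuclideanSpace 𝕜 n := PiLp.single 2 j 1
  calc ‖M i j‖ = ‖Matrix.toEuclideanCLM (𝕜 := 𝕜) M e i‖ := by
        simp [e, Matrix.ofLp_toEuclideanCLM]
    _ ≤ ‖Matrix.toEuclideanCLM (𝕜 := 𝕜) M e‖ := PiLp.norm_apply_le _ i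
    _ ≤ ‖M‖ * ‖e‖ := ContinuousLinearMap.le_opNorm _ _
    _ = ‖M‖ := by rw [PiLp.norm_single, norm_one, mul_one]

lemma Matrix.norm_trace_le_card_mul_l2_opNorm (M : Matrix n n 𝕜) :
    ‖M.trace‖ ≤ Fintype.card n * ‖M‖ :=
  calc ‖M.trace‖ ≤ ∑ i, ‖M i i‖ := norm_sum_le _ _
    _ ≤ ∑ _i : n, ‖M‖ := Finset.sum_le_sum fun i _ => M.norm_apply_le_l2_opNorm i i
    _ = Fintype.card n * ‖M‖ := by rw [Finset.sum_const, nsmul_eq_mul, Finset.card_univ]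

lemma Matrix.norm_trace_unitary_mul_le {A : Matrix n n 𝕜} (hA : A ∈ Matrix.unitaryGroup n 𝕜)
    (D : Matrix n n 𝕜) : ‖(A * D).trace‖ ≤ Fintype.card n * ‖D‖ := by
  simpa only [CStarRing.norm_coe_unitary_mul ⟨A, hA⟩ D] using
    (A * D).norm_trace_le_card_mul_l2_opNorm

end OperatorNorm

lemma Matrix.trace_mul_of_integral {X 𝕜 n : Type*} [MeasurableSpace X] {μ : Measure X} [RCLike 𝕜]
    [Fintype n] (A : Matrix n n 𝕜) {F : X → Matrix n n 𝕜}
    (hF : ∀ i j, Integrable (fun x => F x i j) μ) :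
    (A * Matrix.of fun i j => ∫ x, F x i j ∂μ).trace = ∫ x, (A * F x).trace ∂μ := by
  simp only [Matrix.trace, Matrix.diag, Matrix.mul_apply, Matrix.of_apply]
  rw [integral_finsetSum (f := fun i x => ∑ j, A i j * F x j i) _
    fun i _ => integrable_finsetSum _ fun j _ => (hF j i).const_mul _]
  refine Finset.sum_congr rfl fun i _ => ?_
  rw [integral_finsetSum (f := fun j x => A i j * F x j i) _ fun j _ => (hF j i).const_mul _]
  simp only [integral_const_mul]

section TensorPower

variable {q s : ℕ}

lemma tensorTT_mul (A B : Matrix (Fin q) (Fin q) ℂ) :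
    tensorTT q s (A * B) = tensorTT q s A * tensorTT q s B := by
  ext i j
  have hconj := Matrix.prod_mul_apply (A.map conj) (B.map conj) i.2 j.2
  simp only [← Matrix.map_mul, Matrix.map_apply] at hconj
  rw [Matrix.mul_apply, Fintype.sum_prod_type]
  simp only [tensorTT, Matrix.of_apply]
  rw [Matrix.prod_mul_apply, hconj, Finset.sum_mul_sum]
  simp only [mul_mul_mul_comm]

lemma tensorTT_one : tensorTT q s (1 : Matrix (Fin q) (Fin q) ℂ) = 1 := by
  have hdelta (f g : Fin s → Fin q) :
      (∏ r, if f r = g r then (1 : ℂ) else 0) = if f = g then 1 else 0 := by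
    by_cases h : f = g
    · simp [h]
    · obtain ⟨r, hr⟩ := Function.ne_iff.mp h
      rw [if_neg h]
      exact Finset.prod_eq_zero (Finset.mem_univ r) (if_neg hr)
  ext i j
  simp only [tensorTT, Matrix.of_apply, Matrix.one_apply, apply_ite conj, map_one, map_zero,
    hdelta, Prod.ext_iff]
  split_ifs <;> simp_all

lemma tensorTT_conjTranspose (A : Matrix (Fin q) (Fin q) ℂ) :
    tensorTT q s Aᴴ = (tensorTT q s A)ᴴ := by
  ext i j
  simp only [tensorTT, Matrix.of_apply, Matrix.conjTranspose_apply, RCLike.star_def, map_mul,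
    map_prod, Complex.conj_conj]

lemma tensorTT_mem_unitaryGroup {V : Matrix (Fin q) (Fin q) ℂ}
    (hV : V ∈ Matrix.unitaryGroup (Fin q) ℂ) :
    tensorTT q s V ∈ Matrix.unitaryGroup ((Fin s → Fin q) × (Fin s → Fin q)) ℂ := by
  rw [Matrix.mem_unitaryGroup_iff, Matrix.star_eq_conjTranspose, ← tensorTT_conjTranspose,
    ← tensorTT_mul, ← Matrix.star_eq_conjTranspose, Matrix.mem_unitaryGroup_iff.mp hV, tensorTT_one]

lemma trace_tensorTT (C : Matrix (Fin q) (Fin q) ℂ) :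
    (tensorTT q s C).trace = ((‖C.trace‖ ^ (2 * s) : ℝ) : ℂ) := by
  simp only [Matrix.trace, Matrix.diag, tensorTT, Matrix.of_apply, Fintype.sum_prod_type]
  rw [← Finset.sum_mul_sum, ← Fintype.sum_pow (fun x => C x x),
    ← Fintype.sum_pow (fun x => conj (C x x)), ← map_sum, ← map_pow,
    Complex.mul_conj, Complex.normSq_eq_norm_sq, norm_pow, ← pow_mul, mul_comm]

lemma norm_tensorTT_apply_le_one {W : Matrix (Fin q) (Fin q) ℂ}
    (hW : W ∈ Matrix.unitaryGroup (Fin q) ℂ) (i j : (Fin s → Fin q) × (Fin s → Fin q)) :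
    ‖tensorTT q s W i j‖ ≤ 1 := by
  have hentry (a b : Fin q) : ‖W a b‖ ≤ 1 := entry_norm_bound_of_unitary hW a b
  simp only [tensorTT, Matrix.of_apply, norm_mul, norm_prod, RCLike.norm_conj]
  exact mul_le_one₀ (Finset.prod_le_one (fun _ _ => norm_nonneg _) fun _ _ => hentry _ _)
    (Finset.prod_nonneg fun _ _ => norm_nonneg _)
    (Finset.prod_le_one (fun _ _ => norm_nonneg _) fun _ _ => hentry _ _)

lemma continuous_tensorTT_apply (i j : (Fin s → Fin q) × (Fin s → Fin q)) :
    Continuous fun W : Matrix.unitaryGroup (Fin q) ℂ => tensorTT q s W i j := by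
  have hentry (a b : Fin q) :
      Continuous fun W : Matrix.unitaryGroup (Fin q) ℂ => (W : Matrix (Fin q) (Fin q) ℂ) a b :=
    continuous_subtype_val.matrix_elem a b
  simp only [tensorTT, Matrix.of_apply]
  exact (continuous_finsetProd _ fun r _ => hentry _ _).mul
    (continuous_finsetProd _ fun r _ => (hentry _ _).star)

lemma integrable_tensorTT_apply (μ : Measure (Matrix.unitaryGroup (Fin q) ℂ)) [IsFiniteMeasure μ]
    (i j : (Fin s → Fin q) × (Fin s → Fin q)) :
    Integrable (fun W : Matrix.unitaryGroup (Fin q) ℂ => tensorTT q s W i j) μ :=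
  .of_bound (continuous_tensorTT_apply i j).aestronglyMeasurable 1
    (.of_forall fun W => norm_tensorTT_apply_le_one W.2 i j)

lemma trace_mul_MHaarOp (μ : Measure (Matrix.unitaryGroup (Fin q) ℂ)) [IsFiniteMeasure μ]
    (A : Matrix ((Fin s → Fin q) × (Fin s → Fin q)) ((Fin s → Fin q) × (Fin s → Fin q)) ℂ) :
    (A * MHaarOp q s μ).trace = ∫ W, (A * tensorTT q s W).trace ∂μ :=
  A.trace_mul_of_integral (integrable_tensorTT_apply μ)

lemma trace_mul_momentOp {m : ℕ} (p : Fin m → ℝ) (U : Fin m → Matrix.unitaryGroup (Fin q) ℂ)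
    (A : Matrix ((Fin s → Fin q) × (Fin s → Fin q)) ((Fin s → Fin q) × (Fin s → Fin q)) ℂ) :
    (A * momentOp q s m p U).trace = ∑ k, p k * (A * tensorTT q s (U k)).trace := by
  simp only [momentOp, Matrix.mul_sum, Matrix.trace_sum, Matrix.mul_smul, Matrix.trace_smul,
    smul_eq_mul]

end TensorPower

theorem ensemble_haar_trace_moment_bound_general
    (q s m : ℕ)
    (V : Matrix (Fin q) (Fin q) ℂ) (hV : V ∈ Matrix.unitaryGroup (Fin q) ℂ)
    (p : Fin m → ℝ)
    (U : Fin m → Matrix.unitaryGroup (Fin q) ℂ)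
    (μ : Measure (Matrix.unitaryGroup (Fin q) ℂ))
    [IsProbabilityMeasure μ] :
    |(∑ k, p k * (‖(Vᴴ * (U k : Matrix (Fin q) (Fin q) ℂ)).trace‖ / q) ^ (2 * s)) -
        ∫ W, (‖(Vᴴ * (W : Matrix.unitaryGroup (Fin q) ℂ) : Matrix (Fin q) (Fin q) ℂ).trace‖ / q) ^ (2 * s) ∂μ| ≤
      opNorm (momentOp q s m p U - MHaarOp q s μ) := by
  set A := tensorTT q s Vᴴ
  have hA : A ∈ Matrix.unitaryGroup _ ℂ := tensorTT_mem_unitaryGroup (Unitary.star_mem hV)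
  have htrace (W : Matrix (Fin q) (Fin q) ℂ) :
      (A * tensorTT q s W).trace = ((‖(Vᴴ * W).trace‖ ^ (2 * s) : ℝ) : ℂ) := by
    rw [← tensorTT_mul, trace_tensorTT]
  set r₁ := ∑ k, p k * ‖(Vᴴ * (U k : Matrix (Fin q) (Fin q) ℂ)).trace‖ ^ (2 * s)
  set r₂ := ∫ W : Matrix.unitaryGroup (Fin q) ℂ,
    ‖(Vᴴ * (W : Matrix (Fin q) (Fin q) ℂ)).trace‖ ^ (2 * s) ∂μ
  have hdiff : (A * (momentOp q s m p U - MHaarOp q s μ)).trace = ((r₁ - r₂ : ℝ) : ℂ) := by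
    rw [Matrix.mul_sub, Matrix.trace_sub, trace_mul_momentOp, trace_mul_MHaarOp]
    simp only [htrace]
    rw [integral_complex_ofReal]
    push_cast [r₁, r₂]
    rfl
  have hbound := Matrix.norm_trace_unitary_mul_le hA (momentOp q s m p U - MHaarOp q s μ)
  rw [hdiff, Complex.norm_real, Real.norm_eq_abs] at hbound
  have hcard : (Fintype.card ((Fin s → Fin q) × (Fin s → Fin q)) : ℝ) = (q : ℝ) ^ (2 * s) := by
    simp [Fintype.card_prod, two_mul, pow_add]
  calc _ = |r₁ - r₂| / (q : ℝ) ^ (2 * s) := by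
        simp only [div_pow, ← mul_div_assoc, ← Finset.sum_div, integral_div, ← sub_div, abs_div,
          abs_pow, Nat.abs_cast, r₁, r₂]
    _ ≤ opNorm (momentOp q s m p U - MHaarOp q s μ) :=
        div_le_of_le_mul₀ (by positivity) (norm_nonneg _) (by rwa [mul_comm, ← hcard])

/-- The difference between the ensemble average and the Haar average of
`(|tr(VᴴU)|/q)^{2s}` is bounded by `‖M_ν^{(s)} - M_Haar^{(s)}‖`. -/
theorem ensemble_haar_trace_moment_bound
    (q s m : ℕ) (hq : 1 ≤ q) (hs : 1 ≤ s) (hm : 1 ≤ m)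
    (V : Matrix (Fin q) (Fin q) ℂ) (hV : V ∈ Matrix.unitaryGroup (Fin q) ℂ)
    (p : Fin m → ℝ) (hp : ∀ k, 0 ≤ p k) (hpsum : ∑ k, p k = 1)
    (U : Fin m → Matrix.unitaryGroup (Fin q) ℂ)
    (μ : Measure (Matrix.unitaryGroup (Fin q) ℂ))
    [μ.IsMulLeftInvariant] [IsProbabilityMeasure μ] :
    |(∑ k, p k * (‖(Vᴴ * (U k : Matrix (Fin q) (Fin q) ℂ)).trace‖ / q) ^ (2 * s)) -
        ∫ W, (‖(Vᴴ * (W : Matrix.unitaryGroup (Fin q) ℂ) : Matrix (Fin q) (Fin q) ℂ).trace‖ / q) ^ (2 * s) ∂μ| ≤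
      opNorm (momentOp q s m p U - MHaarOp q s μ) :=
  ensemble_haar_trace_moment_bound_general q s m V hV p U μ
end
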